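/- arXiv:1907.08507 — 8 statements merged into one kernel-verified Lean document; each statement's English description precedes it below -/
import Mathlib

section
/- Let Γ be a group and let D, F ⊂ Γ be finite subsets with D nonempty. Then F has a subset L ⊆ F that is left D-separated (meaning Dλ₁ ∩ Dλ₂ = ∅ for all distinct λ₁, λ₂ ∈ L) with |L| ≥ |F|/|D|². -/
open Pointwise

/-- Every finite subset `F` of a group has a left `D`-separated subset `L ⊆ F`
(i.e. the translates `D·λ`, `λ ∈ L`, are pairwise disjoint) with `|L| ≥ |F| / |D|²`. -/
theorem exists_left_separated_subset {Γ : Type*} [Group Γ] [DecidableEq Γ]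
    (D F : Finset Γ) (hD : D.Nonempty) :
    ∃ L ⊆ F, (∀ l₁ ∈ L, ∀ l₂ ∈ L, l₁ ≠ l₂ →
        Disjoint (D.image (· * l₁)) (D.image (· * l₂))) ∧
      (F.card : ℝ) / (D.card ^ 2) ≤ L.card := by
  classical
  have hDpos : (0 : ℝ) < (D.card : ℝ) ^ 2 := by
    have := hD.card_pos
    positivity
  induction F using Finset.strongInduction with
  | _ F ih =>
    rcases F.eq_empty_or_nonempty with rfl | ⟨f, hf⟩
    · exact ⟨∅, by simp, by simp, by simp⟩
    · set B : Finset Γ := (D⁻¹ * D).image (· * f) with hBdef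
      have hfB : f ∈ B := by
        obtain ⟨d, hd⟩ := hD
        refine Finset.mem_image.2 ⟨d⁻¹ * d, ?_, by simp⟩
        exact Finset.mul_mem_mul (Finset.inv_mem_inv hd) hd
      set F' := F \ B with hF'def
      have hss : F' ⊂ F := Finset.ssubset_iff_of_subset (Finset.sdiff_subset) |>.2
        ⟨f, hf, by simp [hF'def, hfB]⟩
      obtain ⟨L', hL'sub, hsep, hcard⟩ := ih F' hss
      have hfL' : f ∉ L' := fun h => by
        have := hL'sub h
        simp [hF'def, hfB] at this
      -- key disjointness with f
      have hdisj : ∀ l ∈ L', Disjoint (D.image (· * f)) (D.image (· * l)) := by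
        intro l hl
        have hlF' := hL'sub hl
        have hlB : l ∉ B := (Finset.mem_sdiff.1 hlF').2
        rw [Finset.disjoint_left]
        rintro x hx₁ hx₂
        obtain ⟨d₁, hd₁, rfl⟩ := Finset.mem_image.1 hx₁
        obtain ⟨d₂, hd₂, he⟩ := Finset.mem_image.1 hx₂
        apply hlB
        refine Finset.mem_image.2 ⟨d₂⁻¹ * d₁, ?_, ?_⟩
        · exact Finset.mul_mem_mul (by simpa using Finset.inv_mem_inv hd₂) hd₁
        · rw [mul_assoc]
          rw [show d₁ * f = d₂ * l from he.symm]
          group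
      refine ⟨insert f L', ?_, ?_, ?_⟩
      · exact Finset.insert_subset hf (hL'sub.trans Finset.sdiff_subset)
      · intro l₁ h₁ l₂ h₂ hne
        rcases Finset.mem_insert.1 h₁ with rfl | h₁
        · rcases Finset.mem_insert.1 h₂ with rfl | h₂
          · exact absurd rfl hne
          · exact hdisj _ h₂
        · rcases Finset.mem_insert.1 h₂ with he | h₂
          · rw [he]; exact (hdisj _ h₁).symm
          · exact hsep _ h₁ _ h₂ hne
      · have hcardB : (B.card : ℝ) ≤ (D.card : ℝ) ^ 2 := by
          have h1 : B.card ≤ (D⁻¹ * D).card := Finset.card_image_le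
          have h2 : (D⁻¹ * D).card ≤ D⁻¹.card * D.card := Finset.card_mul_le
          have h3 : D⁻¹.card = D.card := Finset.card_inv D
          have : B.card ≤ D.card * D.card := h1.trans (h2.trans_eq (by rw [h3]))
          calc (B.card : ℝ) ≤ (D.card * D.card : ℕ) := by exact_mod_cast this
            _ = (D.card : ℝ) ^ 2 := by push_cast; ring
        have hFle : (F.card : ℝ) ≤ F'.card + B.card := by
          have := Finset.card_le_card_sdiff_add_card (s := F) (t := B)
          exact_mod_cast this
        have hins : ((insert f L').card : ℝ) = L'.card + 1 := by
          rw [Finset.card_insert_of_notMem hfL']; push_cast; ring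
        rw [hins, div_le_iff₀ hDpos]
        rw [div_le_iff₀ hDpos] at hcard
        nlinarith [hcard, hFle, hcardB]
end

section
/- Let Γ be an infinite group, X a minimal Γ-flow (nonempty compact Hausdorff space with a continuous Γ-action such that every orbit is dense), and U ⊆ X a nonempty open set. Then there exists an infinite subset S ⊆ Γ such that the intersection ⋂_{σ ∈ S} σ·U is nonempty. -/
open Pointwise

/-- If `X` is a minimal flow of an infinite group `Γ` and `U ⊆ X` is nonempty open,
then there is an infinite `S ⊆ Γ` with `⋂ σ ∈ S, σ • U` nonempty. -/
theorem minimal_flow_infinite_intersection {Γ : Type*} [Group Γ] [Infinite Γ]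
    {X : Type*} [TopologicalSpace X] [CompactSpace X] [T2Space X] [Nonempty X]
    [MulAction Γ X] [ContinuousConstSMul Γ X]
    (hmin : ∀ x : X, Dense (MulAction.orbit Γ x))
    (U : Set X) (hU : IsOpen U) (hUne : U.Nonempty) :
    ∃ S : Set Γ, S.Infinite ∧ (⋂ σ ∈ S, σ • U).Nonempty := by
  -- every point lies in some translate of U
  have hcov : ∀ x : X, ∃ g : Γ, x ∈ g • U := by
    intro x
    obtain ⟨y, hyo, hyU⟩ := (hmin x).exists_mem_open hU hUne
    obtain ⟨g, rfl⟩ := hyo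
    exact ⟨g⁻¹, by rwa [Set.mem_smul_set_iff_inv_smul_mem, inv_inv]⟩
  -- finite subcover
  obtain ⟨T, hT⟩ := isCompact_univ.elim_finite_subcover (fun g : Γ => g • U)
    (fun g => hU.smul g) (fun x _ => Set.mem_iUnion.2 (hcov x))
  obtain ⟨x₀⟩ := ‹Nonempty X›
  have hx : ∀ σ : Γ, ∃ g ∈ T, σ⁻¹ • x₀ ∈ g • U := by
    intro σ
    have := hT (Set.mem_univ (σ⁻¹ • x₀))
    simpa using this
  choose h hhT hhU using hx
  set f : Γ → Γ := fun σ => σ * h σ with hf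
  refine ⟨Set.range f, ?_, ⟨x₀, ?_⟩⟩
  · -- range f is infinite: fibers are finite
    intro hfin
    have hfib : ∀ τ : Γ, (f ⁻¹' {τ}).Finite := by
      intro τ
      apply Set.Finite.subset (T.finite_toSet.image (fun g => τ * g⁻¹))
      intro σ hσ
      have hστ : σ * h σ = τ := hσ
      exact ⟨h σ, hhT σ, by rw [← hστ]; group⟩
    have : (Set.univ : Set Γ).Finite := by
      have : (Set.univ : Set Γ) ⊆ ⋃ τ ∈ Set.range f, f ⁻¹' {τ} := by
        intro σ _
        exact Set.mem_biUnion (Set.mem_range_self σ) rfl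
      exact Set.Finite.subset (hfin.biUnion fun τ _ => hfib τ) this
    exact Set.infinite_univ this
  · -- x₀ is in every translate indexed by range f
    refine Set.mem_iInter₂.2 ?_
    rintro τ ⟨σ, rfl⟩
    rw [hf]
    rw [mul_smul, Set.mem_smul_set_iff_inv_smul_mem]
    exact hhU σ
end

section
/- Let Γ be an infinite group and k ≥ 1 a natural number. For every nonempty open subset V of the Bernoulli shift k^Γ, there exists n ∈ ℕ such that for every finite subset F ⊂ Γ with |F| ≥ n, there is a point x ∈ k^Γ whose entire orbit is contained in F·V (where F·V = ⋃_{σ ∈ F} σ·V). -/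
/-!
Shrink `V` to a cylinder `{y | y = y₀ on D}`; then `γ • x ∈ σ • V` as soon as the pattern
`y₀|D` occurs in `x` at `σ⁻¹ γ`. Greedily pick `T ⊆ F` of size `m` with `i⁻¹ j ∉ D⁻¹ D` for
`i ≠ j`: for a fixed `γ` the `m` candidate occurrences then use disjoint coordinates, so a uniformly
random configuration on a finite window misses all of them with probability
`(1 - k^{-|D|})^m`, and the bad events of `γ` and `γ'` are independent unless
`γ' γ⁻¹ ∈ T D⁻¹ D T⁻¹`, a set of size at most `m² |D⁻¹ D|`. For `m` large the symmetric Lovász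
local lemma produces a configuration that is good at any finitely many `γ`, and compactness of
`k^Γ` one that is good at all of them.
-/

open Finset
open scoped Pointwise

section ProductSpace

variable {α κ : Type*} [Fintype α] [DecidableEq α] [Fintype κ] [DecidableEq κ]

theorem card_inter_mul_card_eq_of_dependsOn {X Y : Finset (α → κ)} {s t : Set α}
    (hX : DependsOn (· ∈ X) s) (hY : DependsOn (· ∈ Y) t) (hst : Disjoint s t) :
    #(X ∩ Y) * Fintype.card (α → κ) = #X * #Y := by
  classical
  let swap : (α → κ) × (α → κ) → (α → κ) × (α → κ) := fun p =>
    (s.piecewise p.1 p.2, s.piecewise p.2 p.1)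
  have hswap : ∀ p, swap (swap p) = p := fun p => by
    ext a <;> by_cases ha : a ∈ s <;> simp [swap, ha]
  have hleft : ∀ x y : α → κ, ∀ a ∈ s, x a = s.piecewise x y a := fun x y a ha => by simp [ha]
  have hright : ∀ x y : α → κ, ∀ a ∈ t, y a = s.piecewise x y a := fun x y a ha => by
    simp [Set.disjoint_right.mp hst ha]
  rw [← card_product, ← card_univ, ← card_product]
  refine card_nbij' swap swap (fun p hp => ?_) (fun p hp => ?_) (fun p _ => hswap p)
    (fun p _ => hswap p)
  all_goals
    simp only [coe_product, coe_inter, coe_univ, Set.mem_prod, Set.mem_inter_iff, mem_coe,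
      Set.mem_univ, and_true] at hp ⊢
    exact ⟨(hX (hleft _ _)).mp hp.1, (hY (hright _ _)).mp hp.2⟩

theorem card_filter_forall_eq_mul_pow (s : Finset α) (pat : α → κ) :
    #{x : α → κ | ∀ a ∈ s, x a = pat a} * Fintype.card κ ^ #s = Fintype.card (α → κ) := by
  have hpi : ({x : α → κ | ∀ a ∈ s, x a = pat a} : Finset _) =
      Fintype.piFinset fun a => if a ∈ s then {pat a} else univ := by
    ext x
    simp only [mem_filter, mem_univ, true_and, Fintype.mem_piFinset]
    exact ⟨fun h a => by split_ifs with ha <;> simp [h, ha], fun h a ha => by simpa [ha] using h a⟩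
  rw [hpi, Fintype.card_piFinset, Fintype.card_fun, ← card_compl_add_card s, pow_add]
  simp [apply_ite, prod_ite, filter_not, compl_eq_univ_sdiff]

theorem card_inter_le_mul_card_of_dependsOn [Nonempty κ] {X Y : Finset (α → κ)} {s t : Set α}
    (hX : DependsOn (· ∈ X) s) (hY : DependsOn (· ∈ Y) t) (hst : Disjoint s t) {p : ℝ}
    (hp : (#X : ℝ) ≤ p * Fintype.card (α → κ)) : (#(X ∩ Y) : ℝ) ≤ p * #Y := by
  have hΩ : (0 : ℝ) < Fintype.card (α → κ) := by exact_mod_cast Fintype.card_pos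
  have hindep : (#(X ∩ Y) : ℝ) * Fintype.card (α → κ) = #X * #Y := by
    exact_mod_cast card_inter_mul_card_eq_of_dependsOn hX hY hst
  refine le_of_mul_le_mul_right ?_ hΩ
  rw [hindep, mul_right_comm]
  exact mul_le_mul_of_nonneg_right hp (Nat.cast_nonneg _)

def avoiding {ι : Type*} (A : ι → Finset (α → κ)) (S : Finset ι) : Finset (α → κ) :=
  {x | ∀ j ∈ S, x ∉ A j}

variable {ι : Type*} {A : ι → Finset (α → κ)}

@[simp]
theorem avoiding_empty : avoiding A ∅ = univ := by
  simp [avoiding]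

theorem avoiding_anti {S S' : Finset ι} (h : S ⊆ S') : avoiding A S' ⊆ avoiding A S :=
  fun _ hx => by
    simp only [avoiding, mem_filter, mem_univ, true_and] at hx ⊢
    exact fun j hj => hx j (h hj)

theorem card_avoiding_insert [DecidableEq ι] (i : ι) (S : Finset ι) :
    (#(avoiding A (insert i S)) : ℝ) = #(avoiding A S) - #(A i ∩ avoiding A S) := by
  have : avoiding A (insert i S) = avoiding A S \ A i := by
    ext x
    simp only [avoiding, mem_filter, mem_univ, true_and, mem_sdiff, forall_mem_insert]
    tauto
  rw [this, inter_comm, eq_sub_iff_add_eq]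
  exact_mod_cast card_sdiff_add_card_inter _ _

theorem dependsOn_avoiding {S : Finset ι} {supp : ι → Set α}
    (hA : ∀ j ∈ S, DependsOn (· ∈ A j) (supp j)) :
    DependsOn (· ∈ avoiding A S) (⋃ j ∈ S, supp j) := by
  intro x y hxy
  simp only [avoiding, mem_filter, mem_univ, true_and, eq_iff_iff]
  refine forall₂_congr fun j hj => ?_
  exact not_congr (iff_of_eq (hA j hj fun a ha => hxy a (Set.mem_biUnion hj ha)))

theorem card_avoiding_eq_prod [Nonempty κ] (T : Finset ι) (supp : ι → Set α) (q : ι → ℝ)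
    (hA : ∀ i ∈ T, DependsOn (· ∈ A i) (supp i)) (hdisj : (T : Set ι).PairwiseDisjoint supp)
    (hq : ∀ i ∈ T, (#(A i) : ℝ) = q i * Fintype.card (α → κ)) :
    (#(avoiding A T) : ℝ) = (∏ i ∈ T, (1 - q i)) * Fintype.card (α → κ) := by
  classical
  induction T using Finset.induction_on with
  | empty => simp
  | insert j T hj ih =>
    have hjT : Disjoint (supp j) (⋃ i ∈ T, supp i) :=
      Set.disjoint_iUnion₂_right.mpr fun i hi => hdisj (mem_insert_self j T)
        (mem_insert_of_mem hi) (ne_of_mem_of_not_mem hi hj).symm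
    have hinter : (#(A j ∩ avoiding A T) : ℝ) = q j * #(avoiding A T) := by
      have := card_inter_mul_card_eq_of_dependsOn (hA j (mem_insert_self j T))
        (dependsOn_avoiding fun i hi => hA i (mem_insert_of_mem hi)) hjT
      have hΩ : (Fintype.card (α → κ) : ℝ) ≠ 0 := by exact_mod_cast Fintype.card_ne_zero
      apply mul_right_cancel₀ hΩ
      rw [mul_right_comm, ← hq j (mem_insert_self j T)]
      exact_mod_cast this
    rw [card_avoiding_insert, hinter, ih (fun i hi => hA i (mem_insert_of_mem hi))
      (hdisj.subset (by simp)) (fun i hi => hq i (mem_insert_of_mem hi)), prod_insert hj]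
    ring

theorem card_avoiding_le_two_mul [DecidableEq ι] {S₁ S₂ : Finset ι} {d : ℕ} {p : ℝ} (hp₀ : 0 ≤ p)
    (hdp : 4 * (d : ℝ) * p ≤ 1) (hS₁ : #S₁ ≤ d)
    (h : ∀ j ∈ S₁, (#(A j ∩ avoiding A S₂) : ℝ) ≤ 2 * p * #(avoiding A S₂)) :
    (#(avoiding A S₂) : ℝ) ≤ 2 * #(avoiding A (S₁ ∪ S₂)) := by
  have hcover : avoiding A S₂ ⊆
      avoiding A (S₁ ∪ S₂) ∪ S₁.biUnion fun j => A j ∩ avoiding A S₂ := by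
    intro x hx
    by_cases hS₁x : ∃ j ∈ S₁, x ∈ A j
    · obtain ⟨j, hj, hxj⟩ := hS₁x
      exact mem_union_right _ (mem_biUnion.mpr ⟨j, hj, mem_inter.mpr ⟨hxj, hx⟩⟩)
    · refine mem_union_left _ ?_
      simp only [avoiding, mem_filter, mem_univ, true_and, not_exists, not_and, mem_union]
        at hx hS₁x ⊢
      exact fun j hj => hj.elim (hS₁x j) (hx j)
  have hsum : (#(avoiding A S₂) : ℝ) ≤
      #(avoiding A (S₁ ∪ S₂)) + #S₁ * (2 * p * #(avoiding A S₂)) :=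
    calc (#(avoiding A S₂) : ℝ)
        ≤ #(avoiding A (S₁ ∪ S₂)) + ∑ j ∈ S₁, (#(A j ∩ avoiding A S₂) : ℝ) := by
          exact_mod_cast (card_le_card hcover).trans
            ((card_union_le _ _).trans (by gcongr; exact card_biUnion_le))
      _ ≤ #(avoiding A (S₁ ∪ S₂)) + #S₁ * (2 * p * #(avoiding A S₂)) := by
          grw [sum_le_card_nsmul _ _ _ h, nsmul_eq_mul]
  have hS₁p : (#S₁ : ℝ) * (2 * p) ≤ 1 / 2 := by
    have : (#S₁ : ℝ) ≤ d := by exact_mod_cast hS₁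
    nlinarith
  nlinarith [(by positivity : (0 : ℝ) ≤ #(avoiding A S₂))]

theorem card_inter_avoiding_le_of_lovasz [Nonempty κ] (G : Finset ι) (supp : ι → Set α)
    (N : ι → Finset ι) (d : ℕ) {p : ℝ} (hA : ∀ i ∈ G, DependsOn (· ∈ A i) (supp i))
    (hN : ∀ i ∈ G, ∀ j ∈ G, j ∉ N i → Disjoint (supp i) (supp j))
    (hNd : ∀ i ∈ G, #(N i) ≤ d) (hp₀ : 0 ≤ p)
    (hp : ∀ i ∈ G, (#(A i) : ℝ) ≤ p * Fintype.card (α → κ)) (hdp : 4 * (d : ℝ) * p ≤ 1)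
    (S : Finset ι) (hSG : S ⊆ G) (i : ι) (hi : i ∈ G) (hiS : i ∉ S) :
    (#(A i ∩ avoiding A S) : ℝ) ≤ 2 * p * #(avoiding A S) := by
  classical
  induction S using Finset.strongInduction generalizing i with
  | H S ih =>
  set S₁ := S.filter (· ∈ N i)
  set S₂ := S.filter (· ∉ N i)
  have hS : S₁ ∪ S₂ = S := filter_union_filter_not_eq _ S
  have hS₂G : S₂ ⊆ G := (filter_subset _ _).trans hSG
  have hS₂ : (#(avoiding A S₂) : ℝ) ≤ 2 * #(avoiding A S) := by
    refine hS ▸ card_avoiding_le_two_mul hp₀ hdp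
      ((card_le_card fun j hj => (mem_filter.mp hj).2).trans (hNd i hi)) fun j hj => ?_
    obtain ⟨hjS, hjN⟩ := mem_filter.mp hj
    have hjS₂ : j ∉ S₂ := fun h => (mem_filter.mp h).2 hjN
    exact ih S₂ ((ssubset_iff_of_subset (filter_subset _ _)).mpr ⟨j, hjS, hjS₂⟩) hS₂G j
      (hSG hjS) hjS₂
  have hdisj : Disjoint (supp i) (⋃ j ∈ S₂, supp j) :=
    Set.disjoint_iUnion₂_right.mpr fun j hj => hN i hi j (hS₂G hj) (mem_filter.mp hj).2
  calc (#(A i ∩ avoiding A S) : ℝ)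
      ≤ #(A i ∩ avoiding A S₂) := by
        exact_mod_cast card_le_card (inter_subset_inter_left (avoiding_anti (filter_subset _ _)))
    _ ≤ p * #(avoiding A S₂) := card_inter_le_mul_card_of_dependsOn (hA i hi)
        (dependsOn_avoiding fun j hj => hA j (hS₂G hj)) hdisj (hp i hi)
    _ ≤ p * (2 * #(avoiding A S)) := by gcongr
    _ = 2 * p * #(avoiding A S) := by ring

theorem exists_forall_notMem_of_lovasz [Nonempty κ] (G : Finset ι) (supp : ι → Set α)
    (N : ι → Finset ι) (d : ℕ) {p : ℝ} (hA : ∀ i ∈ G, DependsOn (· ∈ A i) (supp i))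
    (hN : ∀ i ∈ G, ∀ j ∈ G, j ∉ N i → Disjoint (supp i) (supp j))
    (hNd : ∀ i ∈ G, #(N i) ≤ d) (hp₀ : 0 ≤ p)
    (hp : ∀ i ∈ G, (#(A i) : ℝ) ≤ p * Fintype.card (α → κ)) (hdp : 4 * ((d : ℝ) + 1) * p ≤ 1) :
    ∃ x, ∀ i ∈ G, x ∉ A i := by
  classical
  have hpos : ∀ S ⊆ G, (0 : ℝ) < #(avoiding A S) := by
    intro S
    induction S using Finset.induction_on with
    | empty => intro _; simp only [avoiding_empty, card_univ]; exact_mod_cast Fintype.card_pos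
    | insert i S hiS ih =>
      intro hSG
      have hS := ih ((subset_insert i S).trans hSG)
      have := card_inter_avoiding_le_of_lovasz G supp N d hA hN hNd hp₀ hp (by nlinarith) S
        ((subset_insert i S).trans hSG) i (hSG (mem_insert_self i S)) hiS
      rw [card_avoiding_insert]
      nlinarith
  obtain ⟨x, hx⟩ := card_pos.mp (by exact_mod_cast hpos G subset_rfl)
  exact ⟨x, (mem_filter.mp hx).2⟩

end ProductSpace

theorem exists_subset_card_eq_pairwise_inv_mul_notMem {Γ : Type*} [Group Γ] [DecidableEq Γ]
    {E : Finset Γ} (hE : E⁻¹ = E) (m : ℕ) {F : Finset Γ} (hF : m * (#E + 1) ≤ #F) :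
    ∃ T ⊆ F, #T = m ∧ (T : Set Γ).Pairwise fun i j => i⁻¹ * j ∉ E := by
  induction m generalizing F with
  | zero => exact ⟨∅, empty_subset F, card_empty, by simp⟩
  | succ m ih =>
    obtain ⟨σ, hσ⟩ : F.Nonempty := card_pos.mp (by nlinarith)
    have hnbhd : #(insert σ (σ • E)) ≤ #E + 1 :=
      (card_insert_le _ _).trans (by rw [card_smul_finset])
    obtain ⟨T, hTF, hT, hsep⟩ := ih (F := F \ insert σ (σ • E)) (by
      have := le_card_sdiff (insert σ (σ • E)) F
      rw [Nat.succ_mul] at hF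
      omega)
    have hfar : ∀ j ∈ T, j ≠ σ ∧ σ⁻¹ * j ∉ E := fun j hj => by
      have := (mem_sdiff.mp (hTF hj)).2
      refine ⟨fun h => this (h ▸ mem_insert_self _ _), fun h => this (mem_insert_of_mem ?_)⟩
      exact mem_smul_finset.mpr ⟨_, h, mul_inv_cancel_left σ j⟩
    refine ⟨insert σ T, insert_subset hσ (hTF.trans sdiff_subset), ?_, ?_⟩
    · rw [card_insert_of_notMem fun h => (hfar σ h).1 rfl, hT]
    · rw [coe_insert, Set.pairwise_insert]
      refine ⟨hsep, fun j hj _ => ⟨(hfar j hj).2, fun h => (hfar j hj).2 ?_⟩⟩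
      rw [← hE]
      simpa using inv_mem_inv h

section Window

variable {Γ κ : Type*} [Group Γ] [DecidableEq Γ]

def windowSpot (W D : Finset Γ) (c : Γ) : Finset W := {w | (w : Γ) * c⁻¹ ∈ D}

theorem card_windowSpot {W D : Finset Γ} {c : Γ} (h : D * {c} ⊆ W) :
    #(windowSpot W D c) = #D := by
  refine card_nbij (fun w => (w : Γ) * c⁻¹) (fun w hw => (mem_filter.mp hw).2)
    (fun w _ w' _ hww' => Subtype.ext (mul_right_cancel hww')) fun d hd => ?_
  have hdc : d * c ∈ W := h (mul_mem_mul hd (mem_singleton_self c))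
  exact ⟨⟨d * c, hdc⟩, by simpa [windowSpot] using hd, by simp⟩

theorem disjoint_windowSpot {W D : Finset Γ} {c₁ c₂ : Γ} (h : c₂ * c₁⁻¹ ∉ D⁻¹ * D) :
    Disjoint (windowSpot W D c₁) (windowSpot W D c₂) := by
  refine disjoint_left.mpr fun w hw₁ hw₂ => h ?_
  simp only [windowSpot, mem_filter, mem_univ, true_and] at hw₁ hw₂
  exact mem_mul.mpr ⟨_, inv_mem_inv hw₂, _, hw₁, by group⟩

theorem disjoint_iUnion_windowSpot_of_notMem {W D T : Finset Γ} {γ γ' : Γ}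
    (h : γ' ∉ T * (D⁻¹ * D) * T⁻¹ * {γ}) :
    Disjoint (⋃ i ∈ T, (windowSpot W D (i⁻¹ * γ) : Set W))
      (⋃ j ∈ T, (windowSpot W D (j⁻¹ * γ') : Set W)) := by
  refine Set.disjoint_iUnion₂_left.mpr fun i hi => Set.disjoint_iUnion₂_right.mpr fun j hj =>
    disjoint_coe.mpr (disjoint_windowSpot fun hij => h ?_)
  convert mul_mem_mul (mul_mem_mul (mul_mem_mul hj hij) (inv_mem_inv hi)) (mem_singleton_self γ)
    using 1
  group

variable [Fintype κ] [DecidableEq κ]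

def windowHit (W D : Finset Γ) (y : Γ → κ) (c : Γ) : Finset (W → κ) :=
  {x | ∀ w ∈ windowSpot W D c, x w = y (w * c⁻¹)}

theorem dependsOn_windowHit (W D : Finset Γ) (y : Γ → κ) (c : Γ) :
    DependsOn (· ∈ windowHit W D y c) (windowSpot W D c : Set W) := by
  intro x x' hxx'
  simp only [windowHit, mem_filter, mem_univ, true_and, eq_iff_iff]
  exact forall₂_congr fun w hw => by rw [hxx' w hw]

theorem card_windowHit [Nonempty κ] {W D : Finset Γ} (y : Γ → κ) {c : Γ} (h : D * {c} ⊆ W) :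
    (#(windowHit W D y c) : ℝ) = (Fintype.card κ ^ #D : ℝ)⁻¹ * Fintype.card (W → κ) := by
  have := card_filter_forall_eq_mul_pow (windowSpot W D c) fun w => y (w * c⁻¹)
  rw [card_windowSpot h] at this
  rw [eq_inv_mul_iff_mul_eq₀ (by positivity), mul_comm]
  exact_mod_cast this

theorem extend_apply_of_mem_windowHit {W D : Finset Γ} {y : Γ → κ} {c : Γ} {x : W → κ}
    (hx : x ∈ windowHit W D y c) (h : D * {c} ⊆ W) (e : Γ → κ) :
    ∀ d ∈ D, Function.extend Subtype.val x e (d * c) = y d := by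
  intro d hd
  have hdc : d * c ∈ W := h (mul_mem_mul hd (mem_singleton_self c))
  have := (mem_filter.mp hx).2 ⟨d * c, hdc⟩ (by simp [windowSpot, hd])
  rw [show d * c = ((⟨d * c, hdc⟩ : W) : Γ) from rfl, Subtype.val_injective.extend_apply, this]
  simp

theorem exists_pattern_near_each_mem [Nonempty κ] (D T : Finset Γ) (y : Γ → κ)
    (hT : (T : Set Γ).Pairwise fun i j => i⁻¹ * j ∉ D⁻¹ * D)
    (hm : 4 * ((#T : ℝ) ^ 2 * #(D⁻¹ * D) + 1) * (1 - (Fintype.card κ ^ #D : ℝ)⁻¹) ^ #T ≤ 1)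
    (G : Finset Γ) : ∃ x : Γ → κ, ∀ γ ∈ G, ∃ i ∈ T, ∀ d ∈ D, x (d * (i⁻¹ * γ)) = y d := by
  set W := G.biUnion fun γ => D * T⁻¹ * {γ}
  have hW : ∀ γ ∈ G, ∀ i ∈ T, D * {i⁻¹ * γ} ⊆ W := by
    intro γ hγ i hi a ha
    obtain ⟨d, hd, _, hc, rfl⟩ := mem_mul.mp ha
    rw [mem_singleton.mp hc, ← mul_assoc]
    exact mem_biUnion.mpr
      ⟨γ, hγ, mul_mem_mul (mul_mem_mul hd (inv_mem_inv hi)) (mem_singleton_self γ)⟩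
  let hit : Γ → Γ → Finset (W → κ) := fun γ i => windowHit W D y (i⁻¹ * γ)
  let spot : Γ → Γ → Set W := fun γ i => windowSpot W D (i⁻¹ * γ)
  have hspot : ∀ γ, (T : Set Γ).PairwiseDisjoint (spot γ) := fun γ i hi j hj hij =>
    disjoint_coe.mpr (disjoint_windowSpot (by simpa [mul_assoc] using hT hj hi hij.symm))
  have hNd : ∀ γ ∈ G, #(T * (D⁻¹ * D) * T⁻¹ * {γ}) ≤ #T ^ 2 * #(D⁻¹ * D) := fun γ _ => by
    rw [card_mul_singleton]
    refine (card_mul_le.trans (Nat.mul_le_mul_right _ card_mul_le)).trans_eq ?_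
    rw [card_inv]
    ring
  have hK : (Fintype.card κ ^ #D : ℝ)⁻¹ ≤ 1 :=
    inv_le_one_of_one_le₀ (one_le_pow₀ (by exact_mod_cast Fintype.card_pos))
  have hp : ∀ γ ∈ G, (#(avoiding (hit γ) T) : ℝ) =
      (1 - (Fintype.card κ ^ #D : ℝ)⁻¹) ^ #T * Fintype.card (W → κ) := fun γ hγ => by
    rw [card_avoiding_eq_prod T (spot γ) _ (fun i _ => dependsOn_windowHit W D y _) (hspot γ)
      (fun i hi => card_windowHit y (hW γ hγ i hi)), prod_const]
  obtain ⟨x, hx⟩ := exists_forall_notMem_of_lovasz (A := fun γ => avoiding (hit γ) T) G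
    (fun γ => ⋃ i ∈ T, spot γ i) (fun γ => T * (D⁻¹ * D) * T⁻¹ * {γ}) (#T ^ 2 * #(D⁻¹ * D))
    (fun γ _ => dependsOn_avoiding fun i _ => dependsOn_windowHit W D y _)
    (fun γ _ γ' _ => disjoint_iUnion_windowSpot_of_notMem) hNd
    (pow_nonneg (sub_nonneg.mpr hK) _) (fun γ hγ => (hp γ hγ).le) (by push_cast; linarith)
  refine ⟨Function.extend Subtype.val x fun _ => Classical.arbitrary κ, fun γ hγ => ?_⟩
  obtain ⟨i, hi, hxi⟩ : ∃ i ∈ T, x ∈ hit γ i := by simpa [avoiding] using hx γ hγ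
  exact ⟨i, hi, extend_apply_of_mem_windowHit hxi (hW γ hγ i hi) _⟩

end Window

theorem exists_pattern_near_each {Γ κ : Type*} [Group Γ] [DecidableEq Γ] [Fintype κ] [Nonempty κ]
    (D T : Finset Γ) (y : Γ → κ) (hT : (T : Set Γ).Pairwise fun i j => i⁻¹ * j ∉ D⁻¹ * D)
    (hm : 4 * ((#T : ℝ) ^ 2 * #(D⁻¹ * D) + 1) * (1 - (Fintype.card κ ^ #D : ℝ)⁻¹) ^ #T ≤ 1) :
    ∃ x : Γ → κ, ∀ γ, ∃ i ∈ T, ∀ d ∈ D, x (d * (i⁻¹ * γ)) = y d := by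
  classical
  let _ : TopologicalSpace κ := ⊥
  have : DiscreteTopology κ := ⟨rfl⟩
  have hclosed : ∀ γ, IsClosed {x : Γ → κ | ∃ i ∈ T, ∀ d ∈ D, x (d * (i⁻¹ * γ)) = y d} := by
    intro γ
    have : {x : Γ → κ | ∃ i ∈ T, ∀ d ∈ D, x (d * (i⁻¹ * γ)) = y d} =
        ⋃ i ∈ T, ⋂ d ∈ D, {x | x (d * (i⁻¹ * γ)) = y d} := by
      ext x
      simp
    rw [this]
    exact isClosed_biUnion_finset fun i _ => isClosed_biInter fun d _ =>
      isClosed_eq (continuous_apply _) continuous_const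
  obtain ⟨x, hx⟩ := CompactSpace.iInter_nonempty hclosed fun G => by
    obtain ⟨x, hx⟩ := exists_pattern_near_each_mem D T y hT hm G
    exact ⟨x, Set.mem_iInter₂.mpr hx⟩
  exact ⟨x, Set.mem_iInter.mp hx⟩

open Filter Topology in
theorem tendsto_sq_mul_add_one_mul_pow_atTop_nhds_zero {q : ℝ} (hq : |q| < 1) (C : ℝ) :
    Tendsto (fun m : ℕ => ((m : ℝ) ^ 2 * C + 1) * q ^ m) atTop (𝓝 0) := by
  have := ((tendsto_pow_const_mul_const_pow_of_abs_lt_one 2 hq).const_mul C).add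
    (tendsto_pow_atTop_nhds_zero_of_abs_lt_one hq)
  simp only [mul_zero, add_zero] at this
  convert this using 2
  ring

theorem exists_finset_forall_eq_imp_mem {ι : Type*} {π : ι → Type*}
    [∀ i, TopologicalSpace (π i)] {V : Set (∀ i, π i)} (hV : IsOpen V) {y : ∀ i, π i}
    (hy : y ∈ V) : ∃ D : Finset ι, ∀ x, (∀ d ∈ D, x d = y d) → x ∈ V := by
  obtain ⟨D, u, hu, hDu⟩ := isOpen_pi_iff.mp hV y hy
  exact ⟨D, fun x hx => hDu fun d hd => hx d hd ▸ (hu d hd).2⟩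

theorem bernoulli_traps_point_general {Γ : Type*} [Group Γ] (k : ℕ)
    (V : Set (Γ → Fin k)) (hV : IsOpen V) (hVne : V.Nonempty) :
    ∃ n : ℕ, ∀ F : Finset Γ, n ≤ F.card →
      ∃ x : Γ → Fin k, ∀ γ : Γ,
        (fun δ => x (δ * γ)) ∈ ⋃ σ ∈ F, (fun y : Γ → Fin k => fun δ => y (δ * σ)) '' V := by
  classical
  obtain ⟨y, hy⟩ := hVne
  have : Nonempty (Fin k) := ⟨y 1⟩
  obtain ⟨D, hD⟩ := exists_finset_forall_eq_imp_mem hV hy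
  have hK₀ : 0 < (Fintype.card (Fin k) ^ #D : ℝ)⁻¹ := by positivity
  have hK₁ : (Fintype.card (Fin k) ^ #D : ℝ)⁻¹ ≤ 1 :=
    inv_le_one_of_one_le₀ (one_le_pow₀ (by exact_mod_cast Fintype.card_pos))
  have hq : |1 - (Fintype.card (Fin k) ^ #D : ℝ)⁻¹| < 1 := abs_lt.mpr ⟨by linarith, by linarith⟩
  obtain ⟨m, hm⟩ := ((tendsto_sq_mul_add_one_mul_pow_atTop_nhds_zero hq #(D⁻¹ * D)).eventually
    (eventually_le_nhds (by norm_num : (0 : ℝ) < 1 / 4))).exists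
  refine ⟨m * (#(D⁻¹ * D) + 1), fun F hF => ?_⟩
  obtain ⟨T, hTF, rfl, hT⟩ :=
    exists_subset_card_eq_pairwise_inv_mul_notMem (by rw [mul_inv_rev, inv_inv]) _ hF
  obtain ⟨x, hx⟩ := exists_pattern_near_each D T y hT (by linarith)
  refine ⟨x, fun γ => ?_⟩
  obtain ⟨σ, hσ, hxσ⟩ := hx γ
  exact Set.mem_iUnion₂.mpr ⟨σ, hTF hσ, _, hD _ hxσ, funext fun δ => by simp [mul_assoc]⟩

/-- For any infinite group `Γ`, `k ≥ 1`, and nonempty open `V ⊆ k^Γ`, there is `n ∈ ℕ`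
such that for every finite `F ⊂ Γ` with `|F| ≥ n` the set `F·V` traps a point, i.e.
some `x ∈ k^Γ` has its whole orbit (under the shift `(γ·x)(δ) = x(δγ)`) inside
`⋃ σ ∈ F, σ·V`. -/
theorem bernoulli_traps_point {Γ : Type*} [Group Γ] [Infinite Γ] (k : ℕ) (hk : 1 ≤ k)
    (V : Set (Γ → Fin k)) (hV : IsOpen V) (hVne : V.Nonempty) :
    ∃ n : ℕ, ∀ F : Finset Γ, n ≤ F.card →
      ∃ x : Γ → Fin k, ∀ γ : Γ,
        (fun δ => x (δ * γ)) ∈ ⋃ σ ∈ F, (fun y : Γ → Fin k => fun δ => y (δ * σ)) '' V :=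
  bernoulli_traps_point_general k V hV hVne
end

section
/- Let Γ be a group and X, Y Γ-flows. If X and Y are disjoint (their only joining is X × Y), then at least one of X and Y is minimal. -/
/-- If two `Γ`-flows `X` and `Y` are disjoint (their only joining is `X × Y`), then at
least one of `X` and `Y` is minimal. -/
theorem disjoint_implies_minimal {Γ : Type*} [Group Γ]
    {X : Type*} [TopologicalSpace X] [CompactSpace X] [T2Space X] [Nonempty X]
    [MulAction Γ X] [ContinuousConstSMul Γ X]
    {Y : Type*} [TopologicalSpace Y] [CompactSpace Y] [T2Space Y] [Nonempty Y]
    [MulAction Γ Y] [ContinuousConstSMul Γ Y]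
    (hdisj : ∀ Z : Set (X × Y), Z.Nonempty → IsClosed Z →
      (∀ γ : Γ, ∀ p ∈ Z, (γ • p.1, γ • p.2) ∈ Z) →
      Prod.fst '' Z = Set.univ → Prod.snd '' Z = Set.univ → Z = Set.univ) :
    (∀ x : X, Dense (MulAction.orbit Γ x)) ∨ (∀ y : Y, Dense (MulAction.orbit Γ y)) := by
  by_contra h
  push_neg at h
  obtain ⟨⟨x₀, hx₀⟩, ⟨y₀, hy₀⟩⟩ := h
  set A : Set X := closure (MulAction.orbit Γ x₀) with hA
  set B : Set Y := closure (MulAction.orbit Γ y₀) with hB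
  -- A ≠ univ, B ≠ univ
  have hAne : A ≠ Set.univ := by
    intro hc
    exact hx₀ (by rw [Dense, ← hA, hc]; intro z; trivial)
  have hBne : B ≠ Set.univ := by
    intro hc
    exact hy₀ (by rw [Dense, ← hB, hc]; intro z; trivial)
  obtain ⟨x', hx'⟩ : ∃ x', x' ∉ A := by
    by_contra hc; push_neg at hc
    exact hAne (Set.eq_univ_of_forall hc)
  obtain ⟨y', hy'⟩ : ∃ y', y' ∉ B := by
    by_contra hc; push_neg at hc
    exact hBne (Set.eq_univ_of_forall hc)
  have hxA : x₀ ∈ A := subset_closure (MulAction.mem_orbit_self x₀)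
  have hyB : y₀ ∈ B := subset_closure (MulAction.mem_orbit_self y₀)
  -- invariance of orbit closures
  have hAinv : ∀ γ : Γ, ∀ a ∈ A, γ • a ∈ A := by
    intro γ a ha
    refine map_mem_closure (continuous_const_smul γ) ha ?_
    rintro z ⟨g, rfl⟩
    exact ⟨γ * g, mul_smul γ g x₀⟩
  have hBinv : ∀ γ : Γ, ∀ b ∈ B, γ • b ∈ B := by
    intro γ b hb
    refine map_mem_closure (continuous_const_smul γ) hb ?_
    rintro z ⟨g, rfl⟩
    exact ⟨γ * g, mul_smul γ g y₀⟩
  set Z : Set (X × Y) := A ×ˢ (Set.univ : Set Y) ∪ (Set.univ : Set X) ×ˢ B with hZ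
  have hZeq : Z = Set.univ := by
    apply hdisj
    · exact ⟨(x₀, y₀), Or.inl ⟨hxA, trivial⟩⟩
    · exact IsClosed.union (isClosed_closure.prod isClosed_univ)
        (isClosed_univ.prod isClosed_closure)
    · rintro γ ⟨a, b⟩ (⟨ha, -⟩ | ⟨-, hb⟩)
      · exact Or.inl ⟨hAinv γ a ha, trivial⟩
      · exact Or.inr ⟨trivial, hBinv γ b hb⟩
    · apply Set.eq_univ_of_forall
      intro x
      exact ⟨(x, y₀), Or.inr ⟨trivial, hyB⟩, rfl⟩
    · apply Set.eq_univ_of_forall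
      intro y
      exact ⟨(x₀, y), Or.inl ⟨hxA, trivial⟩, rfl⟩
  have : (x', y') ∈ Z := hZeq ▸ Set.mem_univ _
  rcases this with ⟨ha, -⟩ | ⟨-, hb⟩
  · exact hx' ha
  · exact hy' hb
end

section
/- Lovász Local Lemma (symmetric, variable version): Let X be a set, k ≥ 1, and let 𝓑 be a collection of bad k-events over X. Suppose there exist p ∈ [0,1) and d ∈ ℕ such that every B ∈ 𝓑 satisfies ℙ[B] ≤ p and deg_𝓑(B) ≤ d, and e·p·(d+1) < 1. Then there exists a function f : X → k avoiding every B ∈ 𝓑. -/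
/-!
Compactness of `X → Fin k`, a product of finite discrete spaces, reduces the theorem to finitely
many events, all determined by the coordinates in a finite set `V`; we then count assignments
`V → Fin k`. Put `q = e p`. The heart is the usual local-lemma induction: among the assignments
avoiding any set `S` of other events, at most a `q`-fraction hit the event `B`. The events of `S`
whose domains miss `dom B` are independent of `B` (overwriting the coordinates in `dom B` is a
bijection that preserves them), which gives the fraction `p`; adding back the at most `d`
neighbours of `B` keeps, by induction, at least a `(1 - q)^d`-fraction of the avoiding set; and
`p ≤ q (1 - q)^d` because `(1 - q)^d ≥ e⁻¹` when `q (d + 1) < 1`. Adding the events one at a time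
then leaves at least a `(1 - q)^n`-fraction of all assignments avoiding all `n` events.
-/

open Finset

namespace LovaszLocalLemma

section Analytic

open Real

theorem exp_neg_one_le_one_sub_pow {q : ℝ} {d : ℕ} (hq0 : 0 ≤ q) (hq : q * (d + 1) < 1) :
    exp (-1) ≤ (1 - q) ^ d := by
  have h1q : 0 < 1 - q := by nlinarith [d.cast_nonneg (α := ℝ)]
  have hbase : exp (-(q / (1 - q))) ≤ 1 - q := by
    rw [exp_neg, inv_le_comm₀ (exp_pos _) h1q]
    calc (1 - q)⁻¹ = q / (1 - q) + 1 := by field_simp; ring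
      _ ≤ exp (q / (1 - q)) := add_one_le_exp _
  calc exp (-1) ≤ exp (d * -(q / (1 - q))) := by
        rw [exp_le_exp, mul_neg, neg_le_neg_iff, mul_div_assoc', div_le_one h1q]
        linarith
    _ = exp (-(q / (1 - q))) ^ d := exp_nat_mul _ _
    _ ≤ (1 - q) ^ d := pow_le_pow_left₀ (exp_pos _).le hbase d

theorem le_exp_one_mul_mul_one_sub_pow {p : ℝ} {d : ℕ} (hp : 0 ≤ p)
    (h : exp 1 * p * (d + 1) < 1) : p ≤ exp 1 * p * (1 - exp 1 * p) ^ d :=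
  calc p = exp 1 * p * exp (-1) := by rw [mul_right_comm, ← exp_add]; simp
    _ ≤ _ := by gcongr; exact exp_neg_one_le_one_sub_pow (by positivity) h

end Analytic

section Counting

variable {Ω ι : Type*} [Fintype Ω] [DecidableEq Ω] [DecidableEq ι] (A : ι → Finset Ω)

theorem card_compl_biUnion_insert_add (i : ι) (S : Finset ι) :
    #((insert i S).biUnion A)ᶜ + #(A i ∩ (S.biUnion A)ᶜ) = #(S.biUnion A)ᶜ := by
  rw [← card_sdiff_add_card_inter (S.biUnion A)ᶜ (A i), inter_comm]
  congr 2
  ext ω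
  simp [and_comm]

theorem one_sub_mul_card_le_card_compl_biUnion_insert {q : ℝ} {i : ι} {S : Finset ι}
    (h : (#(A i ∩ (S.biUnion A)ᶜ) : ℝ) ≤ q * #(S.biUnion A)ᶜ) :
    (1 - q) * #(S.biUnion A)ᶜ ≤ #((insert i S).biUnion A)ᶜ := by
  have := card_compl_biUnion_insert_add A i S
  rw [← Nat.cast_inj (R := ℝ), Nat.cast_add] at this
  linarith

theorem one_sub_pow_mul_card_le_card_compl_biUnion_union {q : ℝ} (hq : q ≤ 1) (R T : Finset ι)
    (h : ∀ i ∈ T, ∀ T' ⊆ T, i ∉ T' →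
      (#(A i ∩ ((R ∪ T').biUnion A)ᶜ) : ℝ) ≤ q * #((R ∪ T').biUnion A)ᶜ) :
    (1 - q) ^ #T * #(R.biUnion A)ᶜ ≤ #((R ∪ T).biUnion A)ᶜ := by
  induction T using Finset.induction_on with
  | empty => simp
  | insert i T hi ih =>
    have ih' := ih fun j hj T' hT' => h j (mem_insert_of_mem hj) T' (hT'.trans (subset_insert _ _))
    rw [card_insert_of_notMem hi, pow_succ', mul_assoc, union_insert]
    calc (1 - q) * ((1 - q) ^ #T * #(R.biUnion A)ᶜ)
        ≤ (1 - q) * #((R ∪ T).biUnion A)ᶜ := mul_le_mul_of_nonneg_left ih' (sub_nonneg.2 hq)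
      _ ≤ _ := one_sub_mul_card_le_card_compl_biUnion_insert A
          (h i (mem_insert_self _ _) T (subset_insert _ _) hi)

variable {adj : ι → ι → Prop} [DecidableRel adj] {u : Finset ι} {p q : ℝ} {d : ℕ}

theorem card_inter_compl_biUnion_le (hq0 : 0 ≤ q) (hq1 : q ≤ 1) (hpq : p ≤ q * (1 - q) ^ d)
    (hdeg : ∀ i ∈ u, #{j ∈ u | adj i j} ≤ d)
    (hind : ∀ i ∈ u, ∀ S ⊆ u, i ∉ S → (∀ j ∈ S, ¬ adj i j) →
      (#(A i ∩ (S.biUnion A)ᶜ) : ℝ) ≤ p * #(S.biUnion A)ᶜ)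
    {S : Finset ι} (hS : S ⊆ u) {i : ι} (hi : i ∈ u) (hiS : i ∉ S) :
    (#(A i ∩ (S.biUnion A)ᶜ) : ℝ) ≤ q * #(S.biUnion A)ᶜ := by
  induction S using Finset.strongInduction generalizing i with
  | H S ih =>
  set S₁ := {j ∈ S | adj i j}
  set S₂ := {j ∈ S | ¬ adj i j}
  have hS₁ : #S₁ ≤ d := (card_le_card (filter_subset_filter _ hS)).trans (hdeg i hi)
  have hS₂ : (#(A i ∩ (S₂.biUnion A)ᶜ) : ℝ) ≤ p * #(S₂.biUnion A)ᶜ :=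
    hind i hi S₂ ((filter_subset _ _).trans hS) (fun h => hiS (mem_of_mem_filter i h))
      fun j hj => (mem_filter.1 hj).2
  have hgrow : (1 - q) ^ #S₁ * #(S₂.biUnion A)ᶜ ≤ #(S.biUnion A)ᶜ := by
    have := one_sub_pow_mul_card_le_card_compl_biUnion_union A hq1 S₂ S₁ fun j hj T hT hjT => by
      obtain ⟨hjS, hij⟩ := mem_filter.1 hj
      have hRS : S₂ ∪ T ⊆ S := union_subset (filter_subset _ _) (hT.trans (filter_subset _ _))
      have hjR : j ∉ S₂ ∪ T := fun h => (mem_union.1 h).elim (fun h => (mem_filter.1 h).2 hij) hjT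
      exact ih _ ((subset_erase.2 ⟨hRS, hjR⟩).trans_ssubset (erase_ssubset hjS)) (hRS.trans hS)
        (hS hjS) hjR
    rwa [union_comm, filter_union_filter_not_eq] at this
  calc (#(A i ∩ (S.biUnion A)ᶜ) : ℝ)
      ≤ #(A i ∩ (S₂.biUnion A)ᶜ) := by
        gcongr
        exact filter_subset _ S
    _ ≤ p * #(S₂.biUnion A)ᶜ := hS₂
    _ ≤ q * (1 - q) ^ #S₁ * #(S₂.biUnion A)ᶜ := by
        gcongr
        exact hpq.trans (mul_le_mul_of_nonneg_left
          (pow_le_pow_of_le_one (sub_nonneg.2 hq1) (by linarith) hS₁) hq0)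
    _ ≤ q * #(S.biUnion A)ᶜ := by rw [mul_assoc]; gcongr

theorem one_sub_pow_mul_card_le_card_compl_biUnion (hq0 : 0 ≤ q) (hq1 : q ≤ 1)
    (hpq : p ≤ q * (1 - q) ^ d) (hdeg : ∀ i ∈ u, #{j ∈ u | adj i j} ≤ d)
    (hind : ∀ i ∈ u, ∀ S ⊆ u, i ∉ S → (∀ j ∈ S, ¬ adj i j) →
      (#(A i ∩ (S.biUnion A)ᶜ) : ℝ) ≤ p * #(S.biUnion A)ᶜ) :
    (1 - q) ^ #u * Fintype.card Ω ≤ #(u.biUnion A)ᶜ := by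
  simpa using one_sub_pow_mul_card_le_card_compl_biUnion_union A hq1 ∅ u
    fun i hi T hT hiT => card_inter_compl_biUnion_le A hq0 hq1 hpq hdeg hind
      (by simpa using hT) (u := u) hi (by simpa using hiT)

end Counting

section Assignments

variable {X : Type*} {α : X → Type*}

abbrev BadEvent (X : Type*) (α : X → Type*) := Σ D : Finset X, Finset ((x : D) → α x)

def Avoids (f : (x : X) → α x) (B : BadEvent X α) : Prop := B.1.restrict f ∉ B.2

theorem exists_forall_avoids_of_forall_finset [∀ x, Finite (α x)] (𝓑 : Set (BadEvent X α))
    (h : ∀ u : Finset (BadEvent X α), ↑u ⊆ 𝓑 → ∃ f : (x : X) → α x, ∀ B ∈ u, Avoids f B) :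
    ∃ f : (x : X) → α x, ∀ B ∈ 𝓑, Avoids f B := by
  let (x : X) : TopologicalSpace (α x) := ⊥
  have (x : X) : DiscreteTopology (α x) := ⟨rfl⟩
  have (x : X) : CompactSpace (α x) := Finite.compactSpace
  have hclosed (B : 𝓑) : IsClosed {f : (x : X) → α x | Avoids f B} :=
    (isClosed_discrete {a | a ∉ B.1.2}).preimage (Finset.continuous_restrict B.1.1)
  obtain ⟨f, hf⟩ := CompactSpace.iInter_nonempty hclosed fun s => by
    obtain ⟨f, hf⟩ := h (s.map (Function.Embedding.subtype _)) (by simp)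
    exact ⟨f, Set.mem_iInter₂.2 fun B hB => hf B (mem_map_of_mem _ hB)⟩
  exact ⟨f, fun B hB => Set.mem_iInter.1 hf ⟨B, hB⟩⟩

variable [DecidableEq X] {V D : Finset X}

def replaceOn (g : (x : V) → α x) (a : (x : D) → α x) : (x : V) → α x :=
  fun v => if h : v.1 ∈ D then a ⟨v, h⟩ else g v

theorem restrict₂_replaceOn (hD : D ⊆ V) (g : (x : V) → α x) (a : (x : D) → α x) :
    restrict₂ hD (replaceOn g a) = a := by
  funext x
  simp [replaceOn, x.2]

theorem replaceOn_replaceOn_restrict₂ (hD : D ⊆ V) (g : (x : V) → α x) (a : (x : D) → α x) :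
    replaceOn (replaceOn g a) (restrict₂ hD g) = g := by
  funext v
  by_cases h : v.1 ∈ D <;> simp [replaceOn, h]

theorem restrict₂_replaceOn_of_disjoint {C : Finset X} (hC : C ⊆ V) (hCD : Disjoint C D)
    (g : (x : V) → α x) (a : (x : D) → α x) : restrict₂ hC (replaceOn g a) = restrict₂ hC g := by
  funext x
  simp [replaceOn, disjoint_left.1 hCD x.2]

variable [∀ x, Fintype (α x)] [∀ x, DecidableEq (α x)]

theorem card_filter_restrict₂_mem_mul (hD : D ⊆ V) (E : Finset ((x : D) → α x))
    (G : Finset ((x : V) → α x)) (hG : ∀ g (a : (x : D) → α x), replaceOn g a ∈ G ↔ g ∈ G) :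
    #{g ∈ G | restrict₂ hD g ∈ E} * Fintype.card ((x : D) → α x) = #E * #G := by
  rw [← card_univ, mul_comm #E, ← card_product, ← card_product]
  refine (card_nbij' (fun x => (replaceOn x.1 x.2, restrict₂ hD x.1))
    (fun x => (replaceOn x.1 x.2, restrict₂ hD x.1)) ?_ ?_ ?_ ?_).symm
  · rintro ⟨g, a⟩ h
    simp_all [restrict₂_replaceOn]
  · rintro ⟨g, a⟩ h
    simp_all
  · rintro ⟨g, a⟩ -
    simp [replaceOn_replaceOn_restrict₂, restrict₂_replaceOn]
  · rintro ⟨g, a⟩ -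
    simp [replaceOn_replaceOn_restrict₂, restrict₂_replaceOn]

def cylinder (V : Finset X) (B : BadEvent X α) : Finset ((x : V) → α x) :=
  {g | ∃ h : B.1 ⊆ V, restrict₂ h g ∈ B.2}

theorem replaceOn_mem_cylinder_iff {C : BadEvent X α} (hCD : Disjoint C.1 D)
    (g : (x : V) → α x) (a : (x : D) → α x) :
    replaceOn g a ∈ cylinder V C ↔ g ∈ cylinder V C := by
  simp only [cylinder, mem_filter, mem_univ, true_and]
  exact exists_congr fun hC => by rw [restrict₂_replaceOn_of_disjoint hC hCD]

theorem card_cylinder_inter_compl_biUnion_le [∀ x, Nonempty (α x)] {p : ℝ} {B : BadEvent X α}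
    (hB : B.1 ⊆ V) {S : Finset (BadEvent X α)} (hS : ∀ C ∈ S, Disjoint C.1 B.1)
    (hp : (#B.2 : ℝ) / Fintype.card ((x : B.1) → α x) ≤ p) :
    (#(cylinder V B ∩ (S.biUnion (cylinder V))ᶜ) : ℝ) ≤ p * #(S.biUnion (cylinder V))ᶜ := by
  set G := (S.biUnion (cylinder V))ᶜ
  have hG (g : (x : V) → α x) (a : (x : B.1) → α x) : replaceOn g a ∈ G ↔ g ∈ G := by
    simp only [G, mem_compl, mem_biUnion, not_exists, not_and]
    exact forall₂_congr fun C hC => not_congr (replaceOn_mem_cylinder_iff (hS C hC) g a)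
  have hinter : cylinder V B ∩ G = {g ∈ G | restrict₂ hB g ∈ B.2} := by
    ext g
    simp [cylinder, hB, and_comm]
  have hcount : (#{g ∈ G | restrict₂ hB g ∈ B.2} : ℝ) * Fintype.card ((x : B.1) → α x)
      = #B.2 * #G := by exact_mod_cast card_filter_restrict₂_mem_mul hB B.2 G hG
  have hpos : (0 : ℝ) < Fintype.card ((x : B.1) → α x) := by exact_mod_cast Fintype.card_pos
  rw [div_le_iff₀ hpos] at hp
  rw [hinter]
  refine le_of_mul_le_mul_right ?_ hpos
  calc _ = (#B.2 : ℝ) * #G := hcount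
    _ ≤ p * Fintype.card ((x : B.1) → α x) * #G := by gcongr
    _ = _ := by ring

theorem exists_forall_avoids_of_finset [∀ x, Nonempty (α x)] {u : Finset (BadEvent X α)}
    {p q : ℝ} {d : ℕ} (hprob : ∀ B ∈ u, (#B.2 : ℝ) / Fintype.card ((x : B.1) → α x) ≤ p)
    (hdeg : ∀ B ∈ u, #{B' ∈ u | B' ≠ B ∧ ¬ Disjoint B'.1 B.1} ≤ d)
    (hq0 : 0 ≤ q) (hq1 : q < 1) (hpq : p ≤ q * (1 - q) ^ d) :
    ∃ f : (x : X) → α x, ∀ B ∈ u, Avoids f B := by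
  set V := u.sup Sigma.fst
  have hV : ∀ B ∈ u, B.1 ⊆ V := fun B hB => le_sup (f := Sigma.fst) hB
  have hbound := one_sub_pow_mul_card_le_card_compl_biUnion (cylinder V)
    (adj := fun B B' => B' ≠ B ∧ ¬ Disjoint B'.1 B.1) hq0 hq1.le hpq hdeg
    fun B hB S _ hBS hS => card_cylinder_inter_compl_biUnion_le (hV B hB)
      (fun C hC => by simpa [ne_of_mem_of_not_mem hC hBS] using hS C hC) (hprob B hB)
  obtain ⟨g, hg⟩ : ((u.biUnion (cylinder V))ᶜ).Nonempty := by
    rw [← card_pos, ← Nat.cast_pos (α := ℝ)]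
    refine hbound.trans_lt' (mul_pos (pow_pos (sub_pos.2 hq1) _) ?_)
    exact_mod_cast Fintype.card_pos
  refine ⟨fun x => if h : x ∈ V then g ⟨x, h⟩ else Classical.arbitrary _, fun B hB hfB => ?_⟩
  simp only [mem_compl, mem_biUnion, not_exists, not_and] at hg
  refine hg B hB (mem_filter.2 ⟨mem_univ _, hV B hB, ?_⟩)
  convert hfB using 1
  funext x
  simp [hV B hB x.2]

end Assignments

end LovaszLocalLemma

open LovaszLocalLemma

theorem lovasz_local_lemma_general {X : Type*} (k : ℕ) (hk : 1 ≤ k)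
    (𝓑 : Set (Σ D : Finset X, Finset ({x // x ∈ D} → Fin k)))
    (p : ℝ) (hp0 : 0 ≤ p) (d : ℕ)
    (hprob : ∀ B ∈ 𝓑, (B.2.card : ℝ) / (k : ℝ) ^ B.1.card ≤ p)
    (hdeg : ∀ B ∈ 𝓑,
      {B' ∈ 𝓑 | B' ≠ B ∧ ¬ Disjoint B'.1 B.1}.encard ≤ (d : ℕ∞))
    (hcond : Real.exp 1 * p * (d + 1) < 1) :
    ∃ f : X → Fin k, ∀ B ∈ 𝓑, (fun x : {x // x ∈ B.1} => f x) ∉ B.2 := by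
  classical
  have : NeZero k := ⟨by omega⟩
  have hq1 : Real.exp 1 * p < 1 :=
    (le_mul_of_one_le_right (by positivity) (by simp)).trans_lt hcond
  refine exists_forall_avoids_of_forall_finset (α := fun _ => Fin k) 𝓑 fun u hu =>
    exists_forall_avoids_of_finset (fun B hB => by simpa using hprob B (hu hB)) (fun B hB => ?_)
      (by positivity) hq1 (le_exp_one_mul_mul_one_sub_pow hp0 hcond)
  have hsub : ↑{B' ∈ u | B' ≠ B ∧ ¬ Disjoint B'.1 B.1} ⊆ {B' ∈ 𝓑 | B' ≠ B ∧ ¬ Disjoint B'.1 B.1} :=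
    fun B' hB' => by simp only [coe_filter] at hB'; exact ⟨hu hB'.1, hB'.2⟩
  have := (Set.encard_mono hsub).trans (hdeg B (hu hB))
  rwa [Set.encard_coe_eq_coe_finsetCard, Nat.cast_le] at this

/-- Symmetric Lovász Local Lemma in the variable framework: a bad `k`-event over `X` is a
nonempty finite set of functions on a common finite domain `D ⊆ X` (encoded as a sigma
type `Σ D : Finset X, Finset (D → Fin k)`). If every event in `𝓑` has probability at most
`p < 1`, at most `d` neighbors (events with overlapping domain), and `e·p·(d+1) < 1`, then
some `f : X → Fin k` avoids every event of `𝓑`. -/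
theorem lovasz_local_lemma {X : Type*} (k : ℕ) (hk : 1 ≤ k)
    (𝓑 : Set (Σ D : Finset X, Finset ({x // x ∈ D} → Fin k)))
    (hne : ∀ B ∈ 𝓑, B.2.Nonempty)
    (p : ℝ) (hp0 : 0 ≤ p) (hp1 : p < 1) (d : ℕ)
    (hprob : ∀ B ∈ 𝓑, (B.2.card : ℝ) / (k : ℝ) ^ B.1.card ≤ p)
    (hdeg : ∀ B ∈ 𝓑,
      {B' ∈ 𝓑 | B' ≠ B ∧ ¬ Disjoint B'.1 B.1}.encard ≤ (d : ℕ∞))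
    (hcond : Real.exp 1 * p * (d + 1) < 1) :
    ∃ f : X → Fin k, ∀ B ∈ 𝓑, (fun x : {x // x ∈ B.1} => f x) ∉ B.2 :=
  lovasz_local_lemma_general k hk 𝓑 p hp0 d hprob hdeg hcond
end

section
/- Let Γ be a group, k ≥ 1, D ⊂ Γ a nonempty finite set, φ : D → k, L ⊂ Γ a finite set such that L⁻¹ is left D-separated, and γ ∈ Γ. Let B_γ be the set of all functions ψ : DL⁻¹γ → k such that for every λ ∈ L there exists δ ∈ D with ψ(δλ⁻¹γ) ≠ φ(δ). Then |B_γ| / k^{|DL⁻¹γ|} = (1 - k^{-|D|})^{|L|}. -/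
/-- Probability computation for the bad events `B_γ`: if `L⁻¹` is left `D`-separated, then
the fraction of functions `ψ : DL⁻¹γ → k` such that for each `λ ∈ L` some `δ ∈ D` has
`ψ(δλ⁻¹γ) ≠ φ(δ)` is exactly `(1 - k^{-|D|})^{|L|}`. -/
theorem bad_event_probability {Γ : Type*} [Group Γ] [DecidableEq Γ]
    (k : ℕ) (hk : 1 ≤ k) (D : Finset Γ) (hD : D.Nonempty)
    (φ : {δ // δ ∈ D} → Fin k) (L : Finset Γ)
    (hsep : ∀ l₁ ∈ L, ∀ l₂ ∈ L, l₁ ≠ l₂ →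
      Disjoint (D.image (· * l₁⁻¹)) (D.image (· * l₂⁻¹)))
    (γ : Γ) :
    (Nat.card {ψ : {a // a ∈ (D ×ˢ L).image (fun p => p.1 * p.2⁻¹ * γ)} → Fin k //
        ∀ l (hl : l ∈ L), ∃ δ, ∃ hδ : δ ∈ D,
          ψ ⟨δ * l⁻¹ * γ, Finset.mem_image.mpr
              ⟨(δ, l), Finset.mem_product.mpr ⟨hδ, hl⟩, rfl⟩⟩ ≠ φ ⟨δ, hδ⟩} : ℝ)
      / (k : ℝ) ^ ((D ×ˢ L).image (fun p => p.1 * p.2⁻¹ * γ)).card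
    = (1 - ((k : ℝ) ^ D.card)⁻¹) ^ L.card := by
  classical
  set S := (D ×ˢ L).image (fun p : Γ × Γ => p.1 * p.2⁻¹ * γ) with hS
  -- injectivity of the map on D ×ˢ L
  have hinj : Set.InjOn (fun p : Γ × Γ => p.1 * p.2⁻¹ * γ) ↑(D ×ˢ L) := by
    rintro ⟨δ₁, l₁⟩ h₁ ⟨δ₂, l₂⟩ h₂ h
    rw [Finset.mem_coe, Finset.mem_product] at h₁ h₂
    simp only at h
    have h' : δ₁ * l₁⁻¹ = δ₂ * l₂⁻¹ := mul_right_cancel h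
    by_cases hl : l₁ = l₂
    · subst hl
      have : δ₁ = δ₂ := mul_right_cancel h'
      simp [this]
    · exfalso
      have hd := hsep l₁ h₁.2 l₂ h₂.2 hl
      have m1 : δ₁ * l₁⁻¹ ∈ D.image (· * l₁⁻¹) :=
        Finset.mem_image.mpr ⟨δ₁, h₁.1, rfl⟩
      have m2 : δ₁ * l₁⁻¹ ∈ D.image (· * l₂⁻¹) := by
        rw [h']; exact Finset.mem_image.mpr ⟨δ₂, h₂.1, rfl⟩
      exact Finset.disjoint_left.mp hd m1 m2
  have hcardS : S.card = D.card * L.card := by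
    rw [hS, Finset.card_image_of_injOn hinj, Finset.card_product]
  -- the comparison map
  set Φ : ({a // a ∈ S} → Fin k) → ({l // l ∈ L} → {δ // δ ∈ D} → Fin k) :=
    fun ψ l δ => ψ ⟨δ.1 * l.1⁻¹ * γ, Finset.mem_image.mpr
      ⟨(δ.1, l.1), Finset.mem_product.mpr ⟨δ.2, l.2⟩, rfl⟩⟩ with hΦ
  have hΦinj : Function.Injective Φ := by
    intro ψ₁ ψ₂ h
    funext s
    obtain ⟨⟨δ, l⟩, hm, hv⟩ := Finset.mem_image.mp s.2
    have hm' := Finset.mem_product.mp hm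
    have := congrFun (congrFun h ⟨l, hm'.2⟩) ⟨δ, hm'.1⟩
    simp only [hΦ] at this
    convert this using 2 <;> exact Subtype.ext hv.symm
  have hΦbij : Function.Bijective Φ := by
    rw [Fintype.bijective_iff_injective_and_card]
    refine ⟨hΦinj, ?_⟩
    simp [Fintype.card_fun, Fintype.card_coe, hcardS, pow_mul, mul_comm]
  -- the subtype equivalence
  have key : Nat.card {ψ : {a // a ∈ S} → Fin k //
        ∀ l (hl : l ∈ L), ∃ δ, ∃ hδ : δ ∈ D,
          ψ ⟨δ * l⁻¹ * γ, Finset.mem_image.mpr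
              ⟨(δ, l), Finset.mem_product.mpr ⟨hδ, hl⟩, rfl⟩⟩ ≠ φ ⟨δ, hδ⟩}
      = (k ^ D.card - 1) ^ L.card := by
    have hiff : ∀ ψ : {a // a ∈ S} → Fin k,
        (∀ l (hl : l ∈ L), ∃ δ, ∃ hδ : δ ∈ D,
          ψ ⟨δ * l⁻¹ * γ, Finset.mem_image.mpr
              ⟨(δ, l), Finset.mem_product.mpr ⟨hδ, hl⟩, rfl⟩⟩ ≠ φ ⟨δ, hδ⟩)
        ↔ (∀ l : {l // l ∈ L}, Equiv.ofBijective Φ hΦbij ψ l ≠ φ) := by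
      intro ψ
      constructor
      · intro h l hne
        obtain ⟨δ, hδ, hne'⟩ := h l.1 l.2
        exact hne' (by simpa [hΦ, Equiv.ofBijective] using congrFun hne ⟨δ, hδ⟩)
      · intro h l hl
        obtain ⟨δ, hδ⟩ := Function.ne_iff.mp (h ⟨l, hl⟩)
        exact ⟨δ.1, δ.2, by simpa [hΦ, Equiv.ofBijective] using hδ⟩
    have e1 := (Equiv.ofBijective Φ hΦbij).subtypeEquiv
      (q := fun g => ∀ l : {l // l ∈ L}, g l ≠ φ) hiff
    have e2 : {g : {l // l ∈ L} → {δ // δ ∈ D} → Fin k // ∀ l, g l ≠ φ} ≃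
        ({l // l ∈ L} → {f : {δ // δ ∈ D} → Fin k // f ≠ φ}) :=
      Equiv.subtypePiEquivPi (p := fun _ f => f ≠ φ)
    rw [Nat.card_congr (e1.trans e2), Nat.card_eq_fintype_card, Fintype.card_fun,
      Fintype.card_coe]
    congr 1
    have : Fintype.card {f : {δ // δ ∈ D} → Fin k // ¬ f = φ}
        = Fintype.card ({δ // δ ∈ D} → Fin k) - Fintype.card {f // f = φ} :=
      Fintype.card_subtype_compl _
    simpa [Fintype.card_subtype_eq, Fintype.card_fun, Fintype.card_coe] using this
  rw [key, hcardS]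
  have hk0 : (0:ℝ) < (k:ℝ) ^ D.card := by positivity
  have hk1 : 1 ≤ k ^ D.card := Nat.one_le_pow _ _ hk
  rw [Nat.cast_pow, Nat.cast_sub hk1, Nat.cast_pow, Nat.cast_one, pow_mul,
    ← div_pow]
  congr 1
  field_simp
end

section
/- Let Γ be an infinite group, k ≥ 1, D ⊂ Γ a nonempty finite set, and φ : D → k. Then there exists n ∈ ℕ such that for every finite F ⊂ Γ with |F| ≥ n, there is a point x ∈ k^Γ with the property that for every γ ∈ Γ there exist σ ∈ F and δ ∈ D such that x(δσ⁻¹γ) = φ(δ) for all δ ∈ D; equivalently, the orbit of x is contained in F·V_φ. -/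
open Finset
open scoped Pointwise

section LLLHelpers


lemma card_filter_transport {β γ : Type*} [Fintype β] [Fintype γ]
    (E : β ≃ γ) (p : β → Prop) [DecidablePred p] (q : γ → Prop) [DecidablePred q]
    (h : ∀ b, p b ↔ q (E b)) :
    (univ.filter p).card = (univ.filter q).card := by
  apply Finset.card_bij' (fun b _ => E b) (fun c _ => E.symm c)
  · intro a ha
    simp only [mem_filter, mem_univ, true_and] at ha ⊢
    exact (h a).mp ha
  · intro c hc
    simp only [mem_filter, mem_univ, true_and] at hc ⊢
    rw [h (E.symm c), E.apply_symm_apply]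
    exact hc
  · intro a _
    exact E.symm_apply_apply a
  · intro c _
    exact E.apply_symm_apply c

variable {α : Type*} [Fintype α] [DecidableEq α]

lemma card_filter_cyl (S : Finset α) (f : α → Bool) :
    (univ.filter fun b : α → Bool => ∀ a ∈ S, b a = f a).card
      = 2 ^ (Fintype.card α - S.card) := by
  classical
  let E := Equiv.piEquivPiSubtypeProd (fun a => a ∈ S) (fun _ => Bool)
  have h : ∀ b : α → Bool, (∀ a ∈ S, b a = f a)
      ↔ ((fun x : ({ a // a ∈ S } → Bool) × ({ a // ¬ a ∈ S } → Bool) =>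
          x.1 = fun z => f z.1) (E b)) := by
    intro b
    constructor
    · intro hb
      funext z
      show b z.1 = f z.1
      exact hb z.1 z.2
    · intro hb a ha
      have := congrFun hb ⟨a, ha⟩
      exact this
  rw [card_filter_transport E (fun b : α → Bool => ∀ a ∈ S, b a = f a)
    (fun x : ({ a // a ∈ S } → Bool) × ({ a // ¬ a ∈ S } → Bool) =>
      x.1 = fun z => f z.1) h]
  have e1 : (univ.filter fun x : ({ a // a ∈ S } → Bool) × ({ a // ¬ a ∈ S } → Bool) =>
      x.1 = fun z => f z.1)
      = {(fun z => f z.1 : { a // a ∈ S } → Bool)} ×ˢ (univ : Finset ({ a // ¬ a ∈ S } → Bool)) := by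
    ext x
    rw [Finset.mem_product]
    simp only [Finset.mem_filter, Finset.mem_univ, true_and, and_true, Finset.mem_singleton]
  rw [e1, Finset.card_product]
  simp only [Finset.card_singleton, one_mul, Finset.card_univ]
  rw [Fintype.card_fun, Fintype.card_subtype_compl, Fintype.card_coe]
  norm_num

lemma card_filter_and_mul (S : Finset α) (p q : (α → Bool) → Prop)
    [DecidablePred p] [DecidablePred q]
    (hp : ∀ b b' : α → Bool, (∀ a ∈ S, b a = b' a) → (p b ↔ p b'))
    (hq : ∀ b b' : α → Bool, (∀ a ∉ S, b a = b' a) → (q b ↔ q b')) :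
    (univ.filter fun b => p b ∧ q b).card * 2 ^ Fintype.card α
      = (univ.filter p).card * (univ.filter q).card := by
  classical
  let E := Equiv.piEquivPiSubtypeProd (fun a => a ∈ S) (fun _ => Bool)
  let P : ({ a // a ∈ S } → Bool) → Prop := fun g => p (E.symm (g, fun _ => false))
  let Q : ({ a // ¬ a ∈ S } → Bool) → Prop := fun g => q (E.symm (fun _ => false, g))
  have hPb : ∀ b : α → Bool, p b ↔ P (E b).1 := by
    intro b
    apply hp b (E.symm ((E b).1, fun _ => false))
    intro a ha
    rw [Equiv.piEquivPiSubtypeProd_symm_apply]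
    rw [dif_pos ha]
    rfl
  have hQb : ∀ b : α → Bool, q b ↔ Q (E b).2 := by
    intro b
    apply hq b (E.symm (fun _ => false, (E b).2))
    intro a ha
    rw [Equiv.piEquivPiSubtypeProd_symm_apply]
    rw [dif_neg ha]
    rfl
  have t1 : (univ.filter fun b => p b ∧ q b).card
      = (univ.filter fun x : ({ a // a ∈ S } → Bool) × ({ a // ¬ a ∈ S } → Bool) =>
          P x.1 ∧ Q x.2).card := by
    apply card_filter_transport E
    intro b
    exact and_congr (hPb b) (hQb b)
  have t2 : (univ.filter p).card
      = (univ.filter fun x : ({ a // a ∈ S } → Bool) × ({ a // ¬ a ∈ S } → Bool) =>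
          P x.1).card := by
    apply card_filter_transport E
    intro b
    exact hPb b
  have t3 : (univ.filter q).card
      = (univ.filter fun x : ({ a // a ∈ S } → Bool) × ({ a // ¬ a ∈ S } → Bool) =>
          Q x.2).card := by
    apply card_filter_transport E
    intro b
    exact hQb b
  have e1 : (univ.filter fun x : ({ a // a ∈ S } → Bool) × ({ a // ¬ a ∈ S } → Bool) =>
      P x.1 ∧ Q x.2) = univ.filter P ×ˢ univ.filter Q := by
    rw [← Finset.univ_product_univ, Finset.filter_product]
  have e2 : (univ.filter fun x : ({ a // a ∈ S } → Bool) × ({ a // ¬ a ∈ S } → Bool) =>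
      P x.1) = univ.filter P ×ˢ (univ : Finset ({ a // ¬ a ∈ S } → Bool)) := by
    ext x
    simp [Finset.mem_product]
  have e3 : (univ.filter fun x : ({ a // a ∈ S } → Bool) × ({ a // ¬ a ∈ S } → Bool) =>
      Q x.2) = (univ : Finset ({ a // a ∈ S } → Bool)) ×ˢ univ.filter Q := by
    ext x
    simp [Finset.mem_product]
  have hcard : Fintype.card α
      = Fintype.card { a // a ∈ S } + Fintype.card { a // ¬ a ∈ S } := by
    rw [← Fintype.card_sum]
    exact (Fintype.card_congr (Equiv.sumCompl (fun a => a ∈ S))).symm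
  rw [t1, t2, t3, e1, e2, e3, Finset.card_product, Finset.card_product, Finset.card_product,
    Finset.card_univ, Finset.card_univ, hcard, pow_add]
  rw [Fintype.card_fun, Fintype.card_fun]
  norm_num
  ring


lemma extraction {β : Type*} [DecidableEq β] (ball2 : β → Finset β)
    (hrefl : ∀ u, u ∈ ball2 u) (hsym : ∀ u v, u ∈ ball2 v → v ∈ ball2 u)
    (K : ℕ) (hK : ∀ u, (ball2 u).card ≤ K) (S : Finset β) :
    ∃ T ⊆ S, (∀ u ∈ T, ∀ v ∈ T, u ≠ v → v ∉ ball2 u) ∧ S.card ≤ T.card * K := by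
  induction S using Finset.strongInduction with
  | _ S ih =>
    rcases S.eq_empty_or_nonempty with rfl | ⟨u, hu⟩
    · exact ⟨∅, Finset.Subset.refl _, by simp, by simp⟩
    · have hss : S \ ball2 u ⊂ S := by
        refine (Finset.ssubset_iff_of_subset (Finset.sdiff_subset)).mpr ⟨u, hu, by simp [hrefl u]⟩
      obtain ⟨T, hTsub, hTsep, hTcard⟩ := ih _ hss
      have huT : u ∉ T := fun h => (Finset.mem_sdiff.mp (hTsub h)).2 (hrefl u)
      refine ⟨insert u T, ?_, ?_, ?_⟩
      · intro v hv
        rcases Finset.mem_insert.mp hv with rfl | hv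
        · exact hu
        · exact Finset.sdiff_subset (hTsub hv)
      · intro a ha b hb hab
        rcases Finset.mem_insert.mp ha with h1 | h1
        · rcases Finset.mem_insert.mp hb with h2 | h2
          · exact absurd (h1.trans h2.symm) hab
          · intro hc
            exact (Finset.mem_sdiff.mp (hTsub h2)).2 (h1 ▸ hc)
        · rcases Finset.mem_insert.mp hb with h2 | h2
          · intro hc
            exact (Finset.mem_sdiff.mp (hTsub h1)).2 (hsym _ _ (h2 ▸ hc))
          · exact hTsep a h1 b h2 hab
      · rw [Finset.card_insert_of_notMem huT]
        have h1 : S.card ≤ (S \ ball2 u).card + (ball2 u).card := by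
          calc S.card ≤ (S ∪ ball2 u).card := Finset.card_le_card Finset.subset_union_left
          _ = (S \ ball2 u).card + (ball2 u).card := (Finset.card_sdiff_add_card S (ball2 u)).symm
        calc S.card ≤ T.card * K + K := le_trans h1 (add_le_add hTcard (hK u))
        _ = (T.card + 1) * K := by ring

set_option maxHeartbeats 1000000 in
lemma numeric (e n' : ℕ) (he : 1 ≤ e) (hn : 1000 * e ^ 8 * 8 ^ e ≤ n') :
    4 * (1 - (1/2 : ℚ) ^ e) ^ (n' / (e * e)) * ((n' : ℚ) ^ 2 * (e : ℚ) ^ 2) ≤ 1 := by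
  set x : ℚ := (1/2) ^ e with hxdef
  have hx0 : 0 < x := by positivity
  have hx1 : x ≤ 1/2 := by
    calc x ≤ (1/2 : ℚ)^1 := pow_le_pow_of_le_one (by norm_num) (by norm_num) he
    _ = 1/2 := pow_one _
  set M : ℕ := n' / (e * e) with hMdef
  set m : ℕ := M / 3 with hmdef
  have heQ : (1 : ℚ) ≤ (e : ℚ) := by exact_mod_cast he
  have hK0 : 0 < e * e := Nat.mul_pos he he
  have hnQbig : (1000 : ℚ) * (e:ℚ)^8 * (8:ℚ)^e ≤ (n' : ℚ) := by exact_mod_cast hn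
  have he8 : (1:ℚ) ≤ (e:ℚ)^8 := by
    calc (1:ℚ) = 1^8 := (one_pow 8).symm
    _ ≤ (e:ℚ)^8 := pow_le_pow_left₀ (by norm_num) heQ 8
  have h8e : (1:ℚ) ≤ (8:ℚ)^e := by
    calc (1:ℚ) = 1^e := (one_pow e).symm
    _ ≤ (8:ℚ)^e := pow_le_pow_left₀ (by norm_num) (by norm_num) e
  have hn1 : (1000:ℚ) ≤ (n':ℚ) := by
    nlinarith [mul_le_mul he8 h8e (by norm_num : (0:ℚ) ≤ 1) (by positivity : (0:ℚ) ≤ (e:ℚ)^8)]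
  have key1 : n' < (e*e) * M + (e*e) := by
    have h := Nat.div_add_mod n' (e*e)
    rw [← hMdef] at h
    have h2 : n' % (e*e) < e*e := Nat.mod_lt _ hK0
    omega
  have key2 : M < 3 * m + 3 := by
    have h := Nat.div_add_mod M 3
    rw [← hmdef] at h
    have h2 : M % 3 < 3 := Nat.mod_lt _ (by norm_num)
    omega
  have h3m : 3 * m ≤ M := by
    have h := Nat.div_mul_le_self M 3
    rw [← hmdef] at h
    omega
  have hMlarge : 1000 ≤ M := by
    have h1 : e*e ≤ e^8 := by
      have h2 : e*e = e^2 := by ring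
      rw [h2]
      exact Nat.pow_le_pow_right he (by norm_num)
    have h2 : 1 ≤ 8^e := Nat.one_le_pow e 8 (by norm_num)
    have hsmall : 1000 * (e*e) ≤ n' := by
      calc 1000*(e*e) ≤ 1000*e^8 := Nat.mul_le_mul_left _ h1
      _ = 1000*e^8*1 := (mul_one _).symm
      _ ≤ 1000*e^8*8^e := Nat.mul_le_mul_left _ h2
      _ ≤ n' := hn
    rw [hMdef]
    exact (Nat.le_div_iff_mul_le hK0).mpr hsmall
  have hm4 : 4 ≤ m := by omega
  have keyQ : (n':ℚ) < (e:ℚ)^2 * (M:ℚ) + (e:ℚ)^2 := by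
    have hq : (n':ℚ) < (e:ℚ)*(e:ℚ)*(M:ℚ) + (e:ℚ)*(e:ℚ) := by exact_mod_cast key1
    nlinarith [hq]
  have keyQ2 : (M:ℚ) < 3*(m:ℚ) + 3 := by exact_mod_cast key2
  have hmQ : (4:ℚ) ≤ (m:ℚ) := by exact_mod_cast hm4
  have hnm : (n':ℚ) ≤ 4*(e:ℚ)^2*(m:ℚ) := by
    have hnn : (0:ℚ) ≤ (m:ℚ) - 4 := by linarith
    have h7 : (e:ℚ)^2 * (M:ℚ) ≤ (e:ℚ)^2 * (3*(m:ℚ)+3) :=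
      mul_le_mul_of_nonneg_left keyQ2.le (sq_nonneg _)
    nlinarith [h7, keyQ, mul_nonneg (sq_nonneg (e:ℚ)) hnn]
  have hBern : 1 + (m:ℚ)*x ≤ (1+x)^m := one_add_mul_le_pow (by linarith) m
  have hmx3 : ((m:ℚ)*x)^3 ≤ ((1+x)^m)^3 := by
    apply pow_le_pow_left₀ (by positivity) (le_trans (by linarith) hBern)
  have hpow3 : ((1+x)^m)^3 = (1+x)^(3*m) := by rw [← pow_mul, Nat.mul_comm]
  have h5 : (1+x)^(3*m) ≤ (1+x)^M := pow_le_pow_right₀ (by linarith) h3m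
  have hx3 : x^3 = (1/8:ℚ)^e := by
    rw [hxdef, ← pow_mul, mul_comm e 3, pow_mul]
    norm_num
  have hnx3 : (1000:ℚ)*(e:ℚ)^8 ≤ (n':ℚ) * x^3 := by
    rw [hx3]
    have h8 : ((8:ℚ)^e) * ((1/8:ℚ)^e) = 1 := by rw [← mul_pow]; norm_num
    have h18 : (0:ℚ) < (1/8:ℚ)^e := by positivity
    calc (1000:ℚ)*(e:ℚ)^8 = (1000*(e:ℚ)^8*(8:ℚ)^e) * (1/8:ℚ)^e := by
          rw [mul_assoc, h8, mul_one]
    _ ≤ (n':ℚ) * (1/8:ℚ)^e := mul_le_mul_of_nonneg_right hnQbig h18.le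
  have hA : (n':ℚ)*x ≤ (4*(e:ℚ)^2)*((m:ℚ)*x) := by
    calc (n':ℚ)*x ≤ (4*(e:ℚ)^2*(m:ℚ))*x := mul_le_mul_of_nonneg_right hnm hx0.le
    _ = (4*(e:ℚ)^2)*((m:ℚ)*x) := by ring
  have hcube1 : ((n':ℚ)*x)^3 ≤ ((4*(e:ℚ)^2)*((m:ℚ)*x))^3 :=
    pow_le_pow_left₀ (by positivity) hA 3
  have hcube2 : (4*(n':ℚ)^2*(e:ℚ)^2) * (4*(e:ℚ)^2)^3 ≤ ((n':ℚ)*x)^3 := by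
    have h1 : (256:ℚ) * (e:ℚ)^8 ≤ (n':ℚ) * x^3 := by
      have h2 : (256:ℚ) * (e:ℚ)^8 ≤ 1000 * (e:ℚ)^8 := by nlinarith [he8]
      linarith [hnx3]
    calc (4*(n':ℚ)^2*(e:ℚ)^2) * (4*(e:ℚ)^2)^3 = (n':ℚ)^2 * (256*(e:ℚ)^8) := by ring
    _ ≤ (n':ℚ)^2 * ((n':ℚ) * x^3) := mul_le_mul_of_nonneg_left h1 (sq_nonneg _)
    _ = ((n':ℚ)*x)^3 := by ring
  have hfin : 4*(n':ℚ)^2*(e:ℚ)^2 ≤ ((m:ℚ)*x)^3 := by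
    have hpos : (0:ℚ) < (4*(e:ℚ)^2)^3 := by positivity
    have hch := le_trans hcube2 hcube1
    have hh : ((4*(e:ℚ)^2)*((m:ℚ)*x))^3 = ((m:ℚ)*x)^3 * (4*(e:ℚ)^2)^3 := by ring
    rw [hh] at hch
    exact le_of_mul_le_mul_right hch hpos
  have c1 : ((m:ℚ)*x)^3 ≤ (1+x)^M := by
    calc ((m:ℚ)*x)^3 ≤ ((1+x)^m)^3 := hmx3
    _ = (1+x)^(3*m) := hpow3
    _ ≤ (1+x)^M := h5
  have hprod : (1-x)^M * (1+x)^M ≤ 1 := by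
    have hh : (1-x)*(1+x) = 1 - x^2 := by ring
    calc (1-x)^M * (1+x)^M = ((1-x)*(1+x))^M := (mul_pow _ _ _).symm
    _ = (1-x^2)^M := by rw [hh]
    _ ≤ 1 := pow_le_one₀ (by nlinarith) (by nlinarith)
  have h1xnn : (0:ℚ) ≤ (1-x)^M := by
    apply pow_nonneg; linarith
  calc 4 * (1-x)^M * ((n':ℚ)^2*(e:ℚ)^2) = (1-x)^M * (4*(n':ℚ)^2*(e:ℚ)^2) := by ring
  _ ≤ (1-x)^M * (1+x)^M := mul_le_mul_of_nonneg_left (by linarith) h1xnn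
  _ ≤ 1 := hprod

lemma prod_bound {β : Type*} [DecidableEq β] (T : Finset β)
    (ev : β → (α → Bool) → Prop) [∀ u, DecidablePred (ev u)]
    (sup : β → Finset α)
    (hdet : ∀ u, ∀ b b' : α → Bool, (∀ a ∈ sup u, b a = b' a) → (ev u b ↔ ev u b'))
    (hdisj : ∀ u ∈ T, ∀ v ∈ T, u ≠ v → Disjoint (sup u) (sup v))
    (y : ℚ) (hy0 : 0 ≤ y)
    (hyb : ∀ u ∈ T, ((univ.filter (ev u)).card : ℚ) ≤ y * 2 ^ Fintype.card α) :
    ((univ.filter fun b => ∀ u ∈ T, ev u b).card : ℚ)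
      ≤ y ^ T.card * 2 ^ Fintype.card α := by
  classical
  have hNpos : (0:ℚ) < 2 ^ Fintype.card α := by positivity
  revert hdisj hyb
  induction T using Finset.induction_on with
  | empty =>
    intro hdisj hyb
    rw [Finset.filter_true_of_mem (fun _ _ => by simp)]
    rw [Finset.card_univ, Fintype.card_fun]
    simp
  | @insert a s ha ih =>
    intro hdisj hyb
    have e0 : (univ.filter fun b => ∀ u ∈ insert a s, ev u b)
        = univ.filter (fun b => ev a b ∧ ∀ u ∈ s, ev u b) := by
      apply Finset.filter_congr
      intro b _
      simp [Finset.forall_mem_insert]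
    rw [e0]
    have hq : ∀ b b' : α → Bool, (∀ x ∉ sup a, b x = b' x) →
        ((∀ u ∈ s, ev u b) ↔ (∀ u ∈ s, ev u b')) := by
      intro b b' hagree
      have hiff : ∀ u ∈ s, (ev u b ↔ ev u b') := by
        intro u hu
        apply hdet u
        intro x hx
        apply hagree
        have hne : u ≠ a := fun he => ha (he ▸ hu)
        have hd := hdisj u (mem_insert_of_mem hu) a (mem_insert_self _ _) hne
        exact Finset.disjoint_left.mp hd hx
      constructor
      · intro hb u hu; exact (hiff u hu).mp (hb u hu)
      · intro hb u hu; exact (hiff u hu).mpr (hb u hu)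
    have hfact := card_filter_and_mul (sup a) (ev a) (fun b => ∀ u ∈ s, ev u b)
      (fun b b' h => hdet a b b' h) hq
    have hfactQ : ((univ.filter fun b => ev a b ∧ ∀ u ∈ s, ev u b).card : ℚ) * 2 ^ Fintype.card α
        = ((univ.filter (ev a)).card : ℚ) * ((univ.filter fun b => ∀ u ∈ s, ev u b).card : ℚ) := by
      exact_mod_cast hfact
    have h1 : ((univ.filter (ev a)).card : ℚ) ≤ y * 2 ^ Fintype.card α :=
      hyb a (mem_insert_self _ _)
    have h2 : ((univ.filter fun b => ∀ u ∈ s, ev u b).card : ℚ)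
        ≤ y ^ s.card * 2 ^ Fintype.card α := by
      apply ih
      · intro u hu v hv huv
        exact hdisj u (mem_insert_of_mem hu) v (mem_insert_of_mem hv) huv
      · intro u hu
        exact hyb u (mem_insert_of_mem hu)
    rw [Finset.card_insert_of_notMem ha]
    have hr : ((univ.filter fun b => ev a b ∧ ∀ u ∈ s, ev u b).card : ℚ) * 2 ^ Fintype.card α
        ≤ (y ^ (s.card+1) * 2 ^ Fintype.card α) * 2 ^ Fintype.card α := by
      rw [hfactQ]
      calc ((univ.filter (ev a)).card : ℚ) * ((univ.filter fun b => ∀ u ∈ s, ev u b).card : ℚ)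
          ≤ (y * 2 ^ Fintype.card α) * (y ^ s.card * 2 ^ Fintype.card α) := by
            apply mul_le_mul h1 h2 (Nat.cast_nonneg _) (by positivity)
      _ = (y ^ (s.card+1) * 2 ^ Fintype.card α) * 2 ^ Fintype.card α := by ring
    exact le_of_mul_le_mul_right hr hNpos

def CC {α : Type*} [Fintype α] [DecidableEq α] {ι : Type*}
    (bad : ι → (α → Bool) → Prop) [∀ i, DecidablePred (bad i)] (T : Finset ι) :
    Finset (α → Bool) :=
  univ.filter fun b => ∀ i ∈ T, ¬ bad i b

lemma mem_CC {α : Type*} [Fintype α] [DecidableEq α] {ι : Type*}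
    (bad : ι → (α → Bool) → Prop) [∀ i, DecidablePred (bad i)] (T : Finset ι)
    (b : α → Bool) : b ∈ CC bad T ↔ ∀ i ∈ T, ¬ bad i b := by
  simp [CC]

set_option maxHeartbeats 1000000 in
lemma LLL {ι : Type*} [DecidableEq ι] (G0 : Finset ι)
    (bad : ι → (α → Bool) → Prop) [∀ i, DecidablePred (bad i)]
    (supp : ι → Finset α)
    (hdet : ∀ i, ∀ b b' : α → Bool, (∀ a ∈ supp i, b a = b' a) → (bad i b ↔ bad i b'))
    (phat Dg : ℚ) (hp0 : 0 ≤ phat)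
    (hpb : ∀ i ∈ G0, ((univ.filter (bad i)).card : ℚ) ≤ phat * 2 ^ Fintype.card α)
    (hdep : ∀ i ∈ G0,
      (((G0.filter fun j => ¬ Disjoint (supp j) (supp i))).card : ℚ) ≤ Dg)
    (hD1 : 1 ≤ Dg) (hcond : 4 * phat * Dg ≤ 1) :
    ∃ b : α → Bool, ∀ i ∈ G0, ¬ bad i b := by
  classical
  have hphat : phat ≤ 1/4 := by nlinarith
  have hNpos : (0:ℚ) < 2 ^ Fintype.card α := by positivity
  have hCsub : ∀ T T' : Finset ι, T' ⊆ T → CC bad T ⊆ CC bad T' := by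
    intro T T' hsub b hb
    rw [mem_CC] at hb ⊢
    exact fun i hi => hb i (hsub hi)
  have hCsplit : ∀ (T : Finset ι) (j : ι), j ∉ T →
      ((univ.filter (bad j) ∩ CC bad T).card + (CC bad (insert j T)).card = (CC bad T).card) := by
    intro T j hj
    have h1 : univ.filter (bad j) ∩ CC bad T = (CC bad T).filter (bad j) := by
      ext b
      simp only [Finset.mem_inter, Finset.mem_filter, Finset.mem_univ, true_and]
      tauto
    have h2 : CC bad (insert j T) = (CC bad T).filter (fun b => ¬ bad j b) := by
      ext b
      simp only [mem_CC, Finset.mem_filter, Finset.mem_insert, CC, Finset.mem_univ, true_and]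
      constructor
      · intro hball
        exact ⟨fun i hi => hball i (Or.inr hi), hball j (Or.inl rfl)⟩
      · rintro ⟨hball, hbj⟩ i hi
        rcases hi with rfl | hi
        · exact hbj
        · exact hball i hi
    rw [h1, h2]
    exact Finset.card_filter_add_card_filter_not _
  have hCuniv : ((CC bad (∅ : Finset ι)).card : ℚ) = 2 ^ Fintype.card α := by
    have h1 : CC bad (∅ : Finset ι) = univ := by
      apply Finset.filter_true_of_mem
      intro b _
      simp
    rw [h1, Finset.card_univ, Fintype.card_fun]
    push_cast
    norm_num
  have KEY : ∀ (nn : ℕ) (T : Finset ι), T ⊆ G0 → T.card ≤ nn → ∀ i ∈ G0,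
      ((univ.filter (bad i) ∩ CC bad T).card : ℚ) ≤ 2 * phat * (CC bad T).card := by
    intro nn
    induction nn with
    | zero =>
      intro T hTsub hT0 i hi
      have hTe : T = ∅ := Finset.card_eq_zero.mp (Nat.le_zero.mp hT0)
      subst hTe
      have h1 : univ.filter (bad i) ∩ CC bad (∅ : Finset ι) = univ.filter (bad i) := by
        have : CC bad (∅ : Finset ι) = univ := by
          apply Finset.filter_true_of_mem; intro b _; simp
        rw [this, Finset.inter_univ]
      rw [h1, hCuniv]
      nlinarith [hpb i hi, hNpos]
    | succ nn ih =>
      intro T hTsub hTcard i hi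
      by_cases hsmall : T.card ≤ nn
      · exact ih T hTsub hsmall i hi
      set T1 : Finset ι := T.filter (fun j => ¬ Disjoint (supp j) (supp i)) with hT1
      set T2 : Finset ι := T.filter (fun j => Disjoint (supp j) (supp i)) with hT2
      have hT12 : T2 ∪ T1 = T := by
        ext z
        simp only [hT1, hT2, Finset.mem_union, Finset.mem_filter]
        tauto
      have hT2sub : T2 ⊆ T := Finset.filter_subset _ _
      have hT1sub : T1 ⊆ T := Finset.filter_subset _ _
      have hq : ∀ b b' : α → Bool, (∀ a ∉ supp i, b a = b' a) →
          ((∀ j ∈ T2, ¬ bad j b) ↔ (∀ j ∈ T2, ¬ bad j b')) := by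
        intro b b' hagree
        have hiff : ∀ j ∈ T2, (bad j b ↔ bad j b') := by
          intro j hj
          apply hdet j
          intro a haj
          apply hagree
          have hdisjj : Disjoint (supp j) (supp i) := (Finset.mem_filter.mp hj).2
          exact Finset.disjoint_left.mp hdisjj haj
        constructor
        · intro hb j hj hbadj; exact hb j hj ((hiff j hj).mpr hbadj)
        · intro hb j hj hbadj; exact hb j hj ((hiff j hj).mp hbadj)
      have hfact := card_filter_and_mul (supp i) (bad i) (fun b => ∀ j ∈ T2, ¬ bad j b)
        (fun b b' h => hdet i b b' h) hq
      have hinter : (univ.filter fun b => bad i b ∧ ∀ j ∈ T2, ¬ bad j b)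
          = univ.filter (bad i) ∩ CC bad T2 := by
        ext b
        simp only [Finset.mem_filter, Finset.mem_univ, true_and, Finset.mem_inter, mem_CC]
      have hCCT2 : (univ.filter fun b => ∀ j ∈ T2, ¬ bad j b) = CC bad T2 := rfl
      have hstep2 : ((univ.filter (bad i) ∩ CC bad T2).card : ℚ) * 2 ^ Fintype.card α
          = ((univ.filter (bad i)).card : ℚ) * ((CC bad T2).card : ℚ) := by
        rw [← hinter, ← hCCT2]
        exact_mod_cast hfact
      have hstep2' : ((univ.filter (bad i) ∩ CC bad T2).card : ℚ) ≤ phat * (CC bad T2).card := by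
        have h2 := hpb i hi
        have hcs : (0:ℚ) ≤ ((CC bad T2).card : ℚ) := Nat.cast_nonneg _
        have hr : ((univ.filter (bad i) ∩ CC bad T2).card : ℚ) * 2 ^ Fintype.card α
            ≤ (phat * (CC bad T2).card) * 2 ^ Fintype.card α := by
          rw [hstep2]
          calc ((univ.filter (bad i)).card : ℚ) * ((CC bad T2).card:ℚ)
              ≤ (phat * 2 ^ Fintype.card α) * (CC bad T2).card :=
                mul_le_mul_of_nonneg_right h2 hcs
          _ = (phat * (CC bad T2).card) * 2 ^ Fintype.card α := by ring
        exact le_of_mul_le_mul_right hr hNpos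
      have peel : ∀ T1' : Finset ι, T1' ⊆ T1 →
          (1 - 2*phat) ^ T1'.card * ((CC bad T2).card : ℚ) ≤ ((CC bad (T2 ∪ T1')).card : ℚ) := by
        intro T1'
        induction T1' using Finset.induction_on with
        | empty =>
          intro _
          simp
        | @insert j s hj ihs =>
          intro hss
          have hjT1 : j ∈ T1 := hss (mem_insert_self _ _)
          have hsT1 : s ⊆ T1 := fun z hz => hss (mem_insert_of_mem hz)
          have ihs' := ihs hsT1
          have hjT2 : j ∉ T2 := by
            intro hc
            exact (Finset.mem_filter.mp hjT1).2 (Finset.mem_filter.mp hc).2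
          have hjnot : j ∉ T2 ∪ s := by
            rw [Finset.mem_union]
            rintro (hc | hc)
            · exact hjT2 hc
            · exact hj hc
          have hsplit := hCsplit (T2 ∪ s) j hjnot
          have hsub' : T2 ∪ s ⊆ G0 := by
            intro z hz
            rcases Finset.mem_union.mp hz with hz | hz
            · exact hTsub (hT2sub hz)
            · exact hTsub (hT1sub (hsT1 hz))
          have hcard' : (T2 ∪ s).card ≤ nn := by
            have h1 : (T2 ∪ s) ⊆ T.erase j := by
              intro z hz
              rcases Finset.mem_union.mp hz with hz | hz
              · exact Finset.mem_erase.mpr ⟨fun he => hjT2 (he ▸ hz), hT2sub hz⟩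
              · exact Finset.mem_erase.mpr ⟨fun he => hj (he ▸ hz), hT1sub (hsT1 hz)⟩
            have h2 := Finset.card_le_card h1
            have h3 : (T.erase j).card = T.card - 1 := Finset.card_erase_of_mem (hT1sub hjT1)
            omega
          have hKEYj := ih (T2 ∪ s) hsub' hcard' j (hTsub (hT1sub hjT1))
          have hins : T2 ∪ insert j s = insert j (T2 ∪ s) := by
            ext z
            simp only [Finset.mem_union, Finset.mem_insert]
            tauto
          rw [hins, Finset.card_insert_of_notMem hj]
          have hsplitQ : ((univ.filter (bad j) ∩ CC bad (T2 ∪ s)).card : ℚ)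
              + ((CC bad (insert j (T2 ∪ s))).card : ℚ) = ((CC bad (T2 ∪ s)).card : ℚ) := by
            exact_mod_cast hsplit
          have h2p : (0:ℚ) ≤ 1 - 2*phat := by linarith
          calc (1 - 2*phat) ^ (s.card+1) * ((CC bad T2).card : ℚ)
              = (1-2*phat) * ((1-2*phat)^s.card * (CC bad T2).card) := by ring
          _ ≤ (1-2*phat) * ((CC bad (T2 ∪ s)).card : ℚ) :=
              mul_le_mul_of_nonneg_left ihs' h2p
          _ = ((CC bad (T2 ∪ s)).card : ℚ) - 2*phat*((CC bad (T2 ∪ s)).card : ℚ) := by ring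
          _ ≤ ((CC bad (insert j (T2 ∪ s))).card : ℚ) := by linarith [hKEYj, hsplitQ]
      have hT1card : ((T1.card : ℚ)) ≤ Dg := by
        have hsubf : T1 ⊆ G0.filter (fun j => ¬ Disjoint (supp j) (supp i)) := by
          intro z hz
          have h1 := Finset.mem_filter.mp hz
          exact Finset.mem_filter.mpr ⟨hTsub h1.1, h1.2⟩
        have h2 := Finset.card_le_card hsubf
        calc (T1.card : ℚ)
            ≤ ((G0.filter fun j => ¬ Disjoint (supp j) (supp i)).card : ℚ) := by exact_mod_cast h2
        _ ≤ Dg := hdep i hi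
      have hhalf : (1/2 : ℚ) ≤ (1 - 2*phat) ^ T1.card := by
        have hb := one_add_mul_le_pow (a := -(2*phat)) (by linarith) T1.card
        have h2 : 2*phat*(T1.card:ℚ) ≤ 2*phat*Dg :=
          mul_le_mul_of_nonneg_left hT1card (by linarith)
        have h3 : 2*phat*Dg ≤ 1/2 := by nlinarith
        have h4 : (1:ℚ) + (T1.card : ℚ) * (-(2*phat)) = 1 - 2*phat*(T1.card:ℚ) := by ring
        have h5 : (1:ℚ) + -(2*phat) = 1 - 2*phat := by ring
        rw [h4, h5] at hb
        linarith
      have hpeel := peel T1 (Finset.Subset.refl _)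
      rw [hT12] at hpeel
      have hmono : ((univ.filter (bad i) ∩ CC bad T).card : ℚ)
          ≤ ((univ.filter (bad i) ∩ CC bad T2).card : ℚ) := by
        have h1 := Finset.card_le_card
          (Finset.inter_subset_inter (Finset.Subset.refl (univ.filter (bad i))) (hCsub T T2 hT2sub))
        exact_mod_cast h1
      have hCT : (1/2:ℚ) * ((CC bad T2).card : ℚ) ≤ ((CC bad T).card : ℚ) := by
        have h0 : (0:ℚ) ≤ ((CC bad T2).card:ℚ) := Nat.cast_nonneg _
        calc (1/2:ℚ) * ((CC bad T2).card:ℚ)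
            ≤ (1-2*phat)^T1.card * ((CC bad T2).card:ℚ) :=
              mul_le_mul_of_nonneg_right hhalf h0
        _ ≤ ((CC bad T).card : ℚ) := hpeel
      calc ((univ.filter (bad i) ∩ CC bad T).card : ℚ)
          ≤ ((univ.filter (bad i) ∩ CC bad T2).card : ℚ) := hmono
      _ ≤ phat * (CC bad T2).card := hstep2'
      _ ≤ phat * (2 * (CC bad T).card) := by
          apply mul_le_mul_of_nonneg_left _ hp0
          linarith
      _ = 2 * phat * (CC bad T).card := by ring
  have POS : ∀ (nn : ℕ) (T : Finset ι), T ⊆ G0 → T.card ≤ nn → 0 < ((CC bad T).card : ℚ) := by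
    intro nn
    induction nn with
    | zero =>
      intro T hTsub hT0
      have hTe : T = ∅ := Finset.card_eq_zero.mp (Nat.le_zero.mp hT0)
      subst hTe
      rw [hCuniv]
      positivity
    | succ nn ih =>
      intro T hTsub hTcard
      rcases T.eq_empty_or_nonempty with rfl | ⟨j, hj⟩
      · exact ih ∅ (by simp) (by simp)
      · have hsplit := hCsplit (T.erase j) j (Finset.notMem_erase _ _)
        have hins : insert j (T.erase j) = T := Finset.insert_erase hj
        rw [hins] at hsplit
        have hes : T.erase j ⊆ G0 := fun z hz => hTsub (Finset.erase_subset _ _ hz)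
        have hec : (T.erase j).card ≤ nn := by
          have h3 := Finset.card_erase_of_mem hj
          have h4 := Finset.card_pos.mpr ⟨j, hj⟩
          omega
        have hKEYj := KEY nn (T.erase j) hes hec j (hTsub hj)
        have hPOSe := ih (T.erase j) hes hec
        have hsplitQ : ((univ.filter (bad j) ∩ CC bad (T.erase j)).card : ℚ)
            + ((CC bad T).card : ℚ) = ((CC bad (T.erase j)).card : ℚ) := by
          exact_mod_cast hsplit
        nlinarith [hKEYj, hPOSe, hsplitQ, hphat]
  have hpos := POS G0.card G0 (Finset.Subset.refl _) le_rfl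
  have hne : (CC bad G0).Nonempty := by
    rw [← Finset.card_pos]
    exact_mod_cast hpos
  obtain ⟨b, hb⟩ := hne
  exact ⟨b, (mem_CC bad G0 b).mp hb⟩

lemma prod_bound' {β : Type*} [DecidableEq β] (T : Finset β)
    (ev : β → (α → Bool) → Prop) [∀ u, DecidablePred (ev u)]
    (sup : β → Finset α)
    (hdet : ∀ u, ∀ b b' : α → Bool, (∀ a ∈ sup u, b a = b' a) → (ev u b ↔ ev u b'))
    (hdisj : ∀ u ∈ T, ∀ v ∈ T, u ≠ v → Disjoint (sup u) (sup v))
    (y : ℚ) (hy0 : 0 ≤ y)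
    (hyb : ∀ u ∈ T, ((univ.filter (ev u)).card : ℚ) ≤ y * 2 ^ Fintype.card α)
    (q : (α → Bool) → Prop) [DecidablePred q] (hq : ∀ b, q b ↔ ∀ u ∈ T, ev u b) :
    ((univ.filter q).card : ℚ) ≤ y ^ T.card * 2 ^ Fintype.card α := by
  have h := prod_bound T ev sup hdet hdisj y hy0 hyb
  have e1 : univ.filter q = univ.filter (fun b => ∀ u ∈ T, ev u b) :=
    Finset.filter_congr (fun b _ => hq b)
  rw [e1]
  exact h

set_option maxHeartbeats 8000000 in
lemma finite_cover {Γ : Type*} [Group Γ] [DecidableEq Γ]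
    (D : Finset Γ) (hD : D.Nonempty) (F G0 : Finset Γ)
    (hF : 1000 * (D⁻¹ * D).card ^ 8 * 8 ^ (D⁻¹ * D).card ≤ F.card) :
    ∃ P : Finset Γ,
      (∀ p ∈ P, ∀ p' ∈ P, (∃ ε ∈ D⁻¹ * D, ε * p = p') → p' = p) ∧
      (∀ γ ∈ G0, ∃ σ ∈ F, σ⁻¹ * γ ∈ P) := by
  classical
  set E : Finset Γ := D⁻¹ * D with hE
  set e : ℕ := E.card with he
  set n' : ℕ := F.card with hn'
  obtain ⟨δ0, hδ0⟩ := hD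
  have hE1 : (1:Γ) ∈ E := by
    rw [hE]
    exact Finset.mem_mul.mpr ⟨δ0⁻¹, Finset.mem_inv.mpr ⟨δ0, hδ0, rfl⟩, δ0, hδ0, by group⟩
  have hEinv : ∀ ε ∈ E, ε⁻¹ ∈ E := by
    intro ε hε
    rw [hE] at hε ⊢
    obtain ⟨a, ha, b, hb, rfl⟩ := Finset.mem_mul.mp hε
    obtain ⟨a0, ha0, rfl⟩ := Finset.mem_inv.mp ha
    exact Finset.mem_mul.mpr ⟨b⁻¹, Finset.mem_inv.mpr ⟨b, hb, rfl⟩, a0, ha0, by group⟩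
  have he1 : 1 ≤ e := Finset.card_pos.mpr ⟨1, hE1⟩
  have hn'1 : 1000 * e ^ 8 * 8 ^ e ≤ n' := hF
  have hn'pos : 0 < n' := lt_of_lt_of_le (by positivity) hn'1
  -- candidate sets
  set cand : Γ → Finset Γ := fun γ => F.image (fun σ => σ⁻¹ * γ) with hcand
  have hcandcard : ∀ γ, (cand γ).card = n' := by
    intro γ
    rw [hcand]
    rw [Finset.card_image_of_injective _ ?_]
    · exact (mul_left_injective γ).comp (fun a b h => inv_injective h)
  set U : Finset Γ := G0.biUnion cand with hU
  set ballα : {z // z ∈ U} → Finset {z // z ∈ U} :=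
    fun u => univ.filter (fun w => ∃ ε ∈ E, ε * u.1 = w.1) with hball
  have hballrefl : ∀ u, u ∈ ballα u := by
    intro u
    rw [hball]
    exact Finset.mem_filter.mpr ⟨Finset.mem_univ _, ⟨1, hE1, one_mul _⟩⟩
  have hballsym : ∀ u w, w ∈ ballα u → u ∈ ballα w := by
    intro u w hw
    rw [hball] at hw ⊢
    obtain ⟨-, ε, hε, hεw⟩ := Finset.mem_filter.mp hw
    refine Finset.mem_filter.mpr ⟨Finset.mem_univ _, ⟨ε⁻¹, hEinv ε hε, ?_⟩⟩
    rw [← hεw]; group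
  have hballcard : ∀ u, (ballα u).card ≤ e := by
    intro u
    have h1 : (ballα u).card = ((ballα u).image (fun w => w.1)).card :=
      (Finset.card_image_of_injective _ Subtype.val_injective).symm
    have hsub : (ballα u).image (fun w => w.1) ⊆ E.image (fun ε => ε * u.1) := by
      intro z hz
      obtain ⟨w, hw, rfl⟩ := Finset.mem_image.mp hz
      rw [hball] at hw
      obtain ⟨-, ε, hε, hεw⟩ := Finset.mem_filter.mp hw
      exact Finset.mem_image.mpr ⟨ε, hε, hεw⟩
    calc (ballα u).card = ((ballα u).image (fun w => w.1)).card := h1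
    _ ≤ (E.image fun ε => ε * u.1).card := Finset.card_le_card hsub
    _ ≤ e := by rw [he]; exact Finset.card_image_le
  -- good events
  set good : {z // z ∈ U} → ({z // z ∈ U} → Bool) → Prop :=
    fun u b => ∀ w ∈ ballα u, b w = decide (w = u) with hgood
  have hgoodcard : ∀ u, (univ.filter (good u)).card
      = 2 ^ (Fintype.card {z // z ∈ U} - (ballα u).card) := by
    intro u
    have hbridge : univ.filter (good u)
        = univ.filter (fun b : {z // z ∈ U} → Bool => ∀ w ∈ ballα u, b w = decide (w = u)) :=
      Finset.filter_congr (fun b _ => by rw [hgood])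
    rw [hbridge]
    exact card_filter_cyl (ballα u) (fun w => decide (w = u))
  set y : ℚ := 1 - (1/2 : ℚ) ^ e with hy
  have hx01 : (0:ℚ) < (1/2:ℚ)^e := by positivity
  have hx11 : ((1/2:ℚ))^e ≤ 1 := by
    apply pow_le_one₀ (by norm_num) (by norm_num)
  have hy0 : 0 ≤ y := by rw [hy]; linarith
  have hy1 : y ≤ 1 := by rw [hy]; linarith
  have hbadcard : ∀ u, ((univ.filter (fun b => ¬ good u b)).card : ℚ)
      ≤ y * 2 ^ Fintype.card {z // z ∈ U} := by
    intro u
    have hnotcard : (univ.filter (fun b => ¬ good u b)).card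
        = Fintype.card ({z // z ∈ U} → Bool) - (univ.filter (good u)).card := by
      rw [Finset.filter_not, Finset.card_sdiff_of_subset (Finset.filter_subset _ _), Finset.card_univ]
    have hcardfun : (Fintype.card ({z // z ∈ U} → Bool)) = 2 ^ Fintype.card {z // z ∈ U} := by
      rw [Fintype.card_fun]; norm_num
    have hsle : (ballα u).card ≤ Fintype.card {z // z ∈ U} := by
      calc (ballα u).card ≤ (univ : Finset {z // z ∈ U}).card :=
        Finset.card_le_card (Finset.subset_univ _)
      _ = Fintype.card _ := Finset.card_univ
    rw [hnotcard, hgoodcard u, hcardfun]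
    have hle : 2 ^ (Fintype.card {z // z ∈ U} - (ballα u).card)
        ≤ 2 ^ Fintype.card {z // z ∈ U} := Nat.pow_le_pow_right (by norm_num) (Nat.sub_le _ _)
    rw [Nat.cast_sub hle]
    push_cast
    have hkey : ((1/2:ℚ))^e * 2 ^ (Fintype.card {z // z ∈ U})
        ≤ 2 ^ (Fintype.card {z // z ∈ U} - (ballα u).card) := by
      have hs : (ballα u).card ≤ e := hballcard u
      have h2 : ((2:ℚ))^(Fintype.card {z // z ∈ U})
          = 2^(Fintype.card {z // z ∈ U} - (ballα u).card) * 2^((ballα u).card) := by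
        rw [← pow_add, Nat.sub_add_cancel hsle]
      rw [h2]
      have h3 : ((1/2:ℚ))^e * 2^((ballα u).card) ≤ 1 := by
        have h4 : ((1/2:ℚ))^e * 2^((ballα u).card) = 2^((ballα u).card) / 2^e := by
          rw [one_div, inv_pow]
          ring
        rw [h4]
        apply div_le_one_of_le₀
        · exact pow_le_pow_right₀ (by norm_num) hs
        · positivity
      calc ((1/2:ℚ))^e * (2 ^ (Fintype.card {z // z ∈ U} - (ballα u).card) * 2^((ballα u).card))
          = (2^(Fintype.card {z // z ∈ U} - (ballα u).card)) * (((1/2:ℚ))^e * 2^((ballα u).card)) := by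
            ring
      _ ≤ (2^(Fintype.card {z // z ∈ U} - (ballα u).card)) * 1 :=
            mul_le_mul_of_nonneg_left h3 (by positivity)
      _ = 2^(Fintype.card {z // z ∈ U} - (ballα u).card) := mul_one _
    rw [hy]
    linarith [hkey]
  -- ball2 and extraction
  set ball2 : {z // z ∈ U} → Finset {z // z ∈ U} :=
    fun u => univ.filter (fun v => ¬ Disjoint (ballα u) (ballα v)) with hball2
  have hb2refl : ∀ u, u ∈ ball2 u := by
    intro u
    rw [hball2]
    exact Finset.mem_filter.mpr ⟨Finset.mem_univ _,
      Finset.not_disjoint_iff.mpr ⟨u, hballrefl u, hballrefl u⟩⟩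
  have hb2sym : ∀ u v, u ∈ ball2 v → v ∈ ball2 u := by
    intro u v hu
    rw [hball2] at hu ⊢
    have h1 := (Finset.mem_filter.mp hu).2
    exact Finset.mem_filter.mpr ⟨Finset.mem_univ _, fun hd => h1 (Disjoint.symm hd)⟩
  have hb2card : ∀ u, (ball2 u).card ≤ e * e := by
    intro u
    have hsub : ball2 u ⊆ (ballα u).biUnion (fun w => univ.filter (fun v => w ∈ ballα v)) := by
      intro v hv
      rw [hball2] at hv
      obtain ⟨w, hw1, hw2⟩ := Finset.not_disjoint_iff.mp (Finset.mem_filter.mp hv).2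
      exact Finset.mem_biUnion.mpr ⟨w, hw1, Finset.mem_filter.mpr ⟨Finset.mem_univ _, hw2⟩⟩
    have hinner : ∀ w : {z // z ∈ U}, (univ.filter (fun v => w ∈ ballα v)).card ≤ e := by
      intro w
      have heq : univ.filter (fun v : {z // z ∈ U} => w ∈ ballα v) = ballα w := by
        ext v
        simp only [Finset.mem_filter, Finset.mem_univ, true_and]
        constructor
        · intro h; exact hballsym v w h
        · intro h; exact hballsym w v h
      rw [heq]; exact hballcard w
    calc (ball2 u).card ≤ ((ballα u).biUnion (fun w => univ.filter (fun v => w ∈ ballα v))).card :=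
      Finset.card_le_card hsub
    _ ≤ ∑ w ∈ ballα u, (univ.filter (fun v => w ∈ ballα v)).card := Finset.card_biUnion_le
    _ ≤ ∑ _w ∈ ballα u, e := Finset.sum_le_sum (fun w _ => hinner w)
    _ = (ballα u).card * e := by rw [Finset.sum_const, smul_eq_mul]
    _ ≤ e * e := Nat.mul_le_mul_right e (hballcard u)
  -- candα
  set candα : Γ → Finset {z // z ∈ U} := fun γ => univ.filter (fun z => z.1 ∈ cand γ) with hcandα
  have hcandαcard : ∀ γ ∈ G0, (candα γ).card = n' := by
    intro γ hγ
    have hsubU : cand γ ⊆ U := by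
      intro z hz
      rw [hU]
      exact Finset.mem_biUnion.mpr ⟨γ, hγ, hz⟩
    rw [← hcandcard γ, hcandα]
    apply Finset.card_bij (fun (z : {z // z ∈ U}) _ => z.1)
    · intro a ha; exact (Finset.mem_filter.mp ha).2
    · intro a ha b hb hab; exact Subtype.ext hab
    · intro z hz; exact ⟨⟨z, hsubU hz⟩, Finset.mem_filter.mpr ⟨Finset.mem_univ _, hz⟩, rfl⟩
  have hext : ∀ γ : Γ, ∃ T ⊆ candα γ,
      (∀ u ∈ T, ∀ v ∈ T, u ≠ v → v ∉ ball2 u) ∧ (candα γ).card ≤ T.card * (e*e) :=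
    fun γ => extraction ball2 hb2refl hb2sym (e*e) hb2card (candα γ)
  choose Uγ hUγsub hUγsep hUγcard using hext
  -- events
  set bad : Γ → ({z // z ∈ U} → Bool) → Prop := fun γ b => ∀ u ∈ Uγ γ, ¬ good u b with hbad
  set supp : Γ → Finset {z // z ∈ U} := fun γ => (Uγ γ).biUnion ballα with hsupp
  have hgdet : ∀ u : {z // z ∈ U}, ∀ b b' : {z // z ∈ U} → Bool,
      (∀ a ∈ ballα u, b a = b' a) → (good u b ↔ good u b') := by
    intro u b b' hagree
    rw [hgood]
    constructor
    · intro hg w hw; rw [← hagree w hw]; exact hg w hw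
    · intro hg w hw; rw [hagree w hw]; exact hg w hw
  have hdet : ∀ γ, ∀ b b' : {z // z ∈ U} → Bool,
      (∀ a ∈ supp γ, b a = b' a) → (bad γ b ↔ bad γ b') := by
    intro γ b b' hagree
    rw [hbad]
    have hgiff : ∀ u ∈ Uγ γ, (good u b ↔ good u b') := by
      intro u hu
      apply hgdet u
      intro a ha
      apply hagree
      rw [hsupp]
      exact Finset.mem_biUnion.mpr ⟨u, hu, ha⟩
    constructor
    · intro hb u hu hg; exact hb u hu ((hgiff u hu).mpr hg)
    · intro hb u hu hg; exact hb u hu ((hgiff u hu).mp hg)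
  set M : ℕ := n' / (e*e) with hM
  set phat : ℚ := y ^ M with hphat
  have hp0 : 0 ≤ phat := by rw [hphat]; exact pow_nonneg hy0 M
  have hpb : ∀ γ ∈ G0, ((univ.filter (bad γ)).card : ℚ)
      ≤ phat * 2 ^ Fintype.card {z // z ∈ U} := by
    intro γ hγ
    have hdisj : ∀ u ∈ Uγ γ, ∀ v ∈ Uγ γ, u ≠ v → Disjoint (ballα u) (ballα v) := by
      intro u hu v hv huv
      have h1 := hUγsep γ u hu v hv huv
      rw [hball2] at h1
      by_contra hc
      exact h1 (Finset.mem_filter.mpr ⟨Finset.mem_univ _, hc⟩)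
    have h1 : ((univ.filter (bad γ)).card : ℚ)
        ≤ y ^ (Uγ γ).card * 2 ^ Fintype.card {z // z ∈ U} :=
      prod_bound' (Uγ γ) (fun u b => ¬ good u b) ballα
        (fun u b b' h => not_congr (hgdet u b b' h)) hdisj y hy0
        (fun u _ => hbadcard u) (bad γ) (fun b => by simp only [hbad])
    have hMle : M ≤ (Uγ γ).card := by
      have ha1 : n' ≤ (Uγ γ).card * (e*e) := by
        rw [← hcandαcard γ hγ]; exact hUγcard γ
      have ha2 : n' / (e*e) ≤ ((Uγ γ).card * (e*e)) / (e*e) := Nat.div_le_div_right ha1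
      rw [hM]
      rwa [Nat.mul_div_cancel _ (Nat.mul_pos he1 he1)] at ha2
    have h2 : y ^ (Uγ γ).card ≤ phat := by
      rw [hphat]
      exact pow_le_pow_of_le_one hy0 hy1 hMle
    calc ((univ.filter (bad γ)).card : ℚ)
        ≤ y ^ (Uγ γ).card * 2 ^ Fintype.card {z // z ∈ U} := h1
    _ ≤ phat * 2 ^ Fintype.card {z // z ∈ U} := by
        apply mul_le_mul_of_nonneg_right h2 (by positivity)
  -- dependency bound
  set Gf : Finset Γ := F * E⁻¹ * E * F⁻¹ with hGf
  have hGfcard : Gf.card ≤ n' * e * e * n' := by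
    rw [hGf]
    calc (F * E⁻¹ * E * F⁻¹).card ≤ (F * E⁻¹ * E).card * F⁻¹.card := Finset.card_mul_le
    _ ≤ ((F * E⁻¹).card * E.card) * F⁻¹.card :=
        Nat.mul_le_mul_right _ Finset.card_mul_le
    _ ≤ ((F.card * E⁻¹.card) * E.card) * F⁻¹.card :=
        Nat.mul_le_mul_right _ (Nat.mul_le_mul_right _ Finset.card_mul_le)
    _ = n' * e * e * n' := by rw [Finset.card_inv, Finset.card_inv, ← hn', ← he]
  have hdep : ∀ γ ∈ G0, ((G0.filter (fun γ' => ¬ Disjoint (supp γ') (supp γ))).card : ℚ)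
      ≤ (n':ℚ)^2 * (e:ℚ)^2 := by
    intro γ hγ
    have hsubset : G0.filter (fun γ' => ¬ Disjoint (supp γ') (supp γ))
        ⊆ Gf.image (fun g => g * γ) := by
      intro γ' hγ'
      have hnd := (Finset.mem_filter.mp hγ').2
      obtain ⟨z, hz1, hz2⟩ := Finset.not_disjoint_iff.mp hnd
      rw [hsupp] at hz1 hz2
      obtain ⟨u', hu', hzball'⟩ := Finset.mem_biUnion.mp hz1
      obtain ⟨u, hu, hzball⟩ := Finset.mem_biUnion.mp hz2
      rw [hball] at hzball' hzball
      obtain ⟨-, ε', hε', hεz'⟩ := Finset.mem_filter.mp hzball'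
      obtain ⟨-, ε, hε, hεz⟩ := Finset.mem_filter.mp hzball
      have hu'c : u'.1 ∈ cand γ' := by
        have := hUγsub γ' hu'
        rw [hcandα] at this
        exact (Finset.mem_filter.mp this).2
      have huc : u.1 ∈ cand γ := by
        have := hUγsub γ hu
        rw [hcandα] at this
        exact (Finset.mem_filter.mp this).2
      rw [hcand] at hu'c huc
      obtain ⟨σ', hσ', hσ'e⟩ := Finset.mem_image.mp hu'c
      obtain ⟨σ, hσ, hσe⟩ := Finset.mem_image.mp huc
      refine Finset.mem_image.mpr ⟨σ' * ε'⁻¹ * ε * σ⁻¹, ?_, ?_⟩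
      · rw [hGf]
        exact Finset.mul_mem_mul (Finset.mul_mem_mul (Finset.mul_mem_mul hσ'
          (Finset.mem_inv.mpr ⟨ε', hε', rfl⟩)) hε) (Finset.mem_inv.mpr ⟨σ, hσ, rfl⟩)
      · have e1 : ε' * (σ'⁻¹ * γ') = z.1 := by rw [hσ'e]; exact hεz'
        have e2 : ε * (σ⁻¹ * γ) = z.1 := by rw [hσe]; exact hεz
        have e3 : σ' * ε'⁻¹ * (ε * (σ⁻¹ * γ)) = γ' := by
          rw [e2, ← e1]; group
        calc σ' * ε'⁻¹ * ε * σ⁻¹ * γ = σ' * ε'⁻¹ * (ε * (σ⁻¹ * γ)) := by group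
        _ = γ' := e3
    have h1 := Finset.card_le_card hsubset
    have h2 := Finset.card_image_le (f := fun g => g * γ) (s := Gf)
    have h3 : (G0.filter (fun γ' => ¬ Disjoint (supp γ') (supp γ))).card ≤ n' * e * e * n' :=
      le_trans (le_trans h1 h2) hGfcard
    calc ((G0.filter (fun γ' => ¬ Disjoint (supp γ') (supp γ))).card : ℚ)
        ≤ ((n' * e * e * n' : ℕ) : ℚ) := by exact_mod_cast h3
    _ = (n':ℚ)^2 * (e:ℚ)^2 := by push_cast; ring
  have hD1 : (1:ℚ) ≤ (n':ℚ)^2 * (e:ℚ)^2 := by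
    have h1 : (1:ℚ) ≤ (n':ℚ) := by exact_mod_cast hn'pos
    have h2 : (1:ℚ) ≤ (e:ℚ) := by exact_mod_cast he1
    have h3 : (1:ℚ) ≤ (n':ℚ)^2 := by
      calc (1:ℚ) = 1^2 := by norm_num
      _ ≤ (n':ℚ)^2 := pow_le_pow_left₀ (by norm_num) h1 2
    have h4 : (1:ℚ) ≤ (e:ℚ)^2 := by
      calc (1:ℚ) = 1^2 := by norm_num
      _ ≤ (e:ℚ)^2 := pow_le_pow_left₀ (by norm_num) h2 2
    calc (1:ℚ) = 1 * 1 := by norm_num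
    _ ≤ (n':ℚ)^2 * (e:ℚ)^2 := mul_le_mul h3 h4 (by norm_num) (sq_nonneg _)
  have hcond : 4 * phat * ((n':ℚ)^2 * (e:ℚ)^2) ≤ 1 := by
    have hnum := numeric e n' he1 hn'1
    rw [hphat, hy, hM]
    exact hnum
  obtain ⟨b, hb⟩ := LLL G0 bad supp hdet phat ((n':ℚ)^2 * (e:ℚ)^2) hp0 hpb hdep hD1 hcond
  set P : Finset Γ := (univ.filter (fun z : {z // z ∈ U} => good z b)).image (fun z => z.1)
    with hP
  refine ⟨P, ?_, ?_⟩
  · intro p hp p' hp' hex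
    obtain ⟨ε, hε, hεp⟩ := hex
    rw [hP] at hp hp'
    obtain ⟨z, hz, rfl⟩ := Finset.mem_image.mp hp
    obtain ⟨z', hz', rfl⟩ := Finset.mem_image.mp hp'
    have hgz : good z b := (Finset.mem_filter.mp hz).2
    have hgz' : good z' b := (Finset.mem_filter.mp hz').2
    have hz'ball : z' ∈ ballα z := by
      rw [hball]
      exact Finset.mem_filter.mpr ⟨Finset.mem_univ _, ⟨ε, hε, hεp⟩⟩
    have h1 : b z' = decide (z' = z) := hgz z' hz'ball
    have h2 : b z' = true := by
      have h3 := hgz' z' (hballrefl z')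
      simpa using h3
    rw [h2] at h1
    have h4 : z' = z := of_decide_eq_true h1.symm
    rw [h4]
  · intro γ hγ
    have hnb := hb γ hγ
    rw [hbad] at hnb
    obtain ⟨u, hu, hgu⟩ : ∃ u ∈ Uγ γ, good u b := by
      by_contra hcon
      push_neg at hcon
      exact hnb (fun u hu => hcon u hu)
    have huc : u.1 ∈ cand γ := by
      have := hUγsub γ hu
      rw [hcandα] at this
      exact (Finset.mem_filter.mp this).2
    rw [hcand] at huc
    obtain ⟨σ, hσ, hσe⟩ := Finset.mem_image.mp huc
    refine ⟨σ, hσ, ?_⟩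
    rw [hσe, hP]
    exact Finset.mem_image.mpr ⟨u, Finset.mem_filter.mpr ⟨Finset.mem_univ _, hgu⟩, rfl⟩

end LLLHelpers

set_option maxHeartbeats 2000000 in
/-- Theorem 2 for basic clopen sets: for an infinite group `Γ`, `k ≥ 1`, a nonempty finite
`D ⊂ Γ` and `φ : D → k`, there is `n` such that for every finite `F ⊂ Γ` with `|F| ≥ n`
there is `x ∈ k^Γ` whose orbit under the shift `(γ·x)(δ) = x(δγ)` is contained in
`F·V_φ`: for every `γ ∈ Γ` there is `σ ∈ F` with `x(δσ⁻¹γ) = φ(δ)` for all `δ ∈ D`. -/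
theorem bernoulli_traps_point_basic {Γ : Type*} [Group Γ] [Infinite Γ]
    (k : ℕ) (hk : 1 ≤ k) (D : Finset Γ) (hD : D.Nonempty)
    (φ : {δ // δ ∈ D} → Fin k) :
    ∃ n : ℕ, ∀ F : Finset Γ, n ≤ F.card →
      ∃ x : Γ → Fin k, ∀ γ : Γ, ∃ σ ∈ F,
        ∀ δ (hδ : δ ∈ D), x (δ * σ⁻¹ * γ) = φ ⟨δ, hδ⟩ := by
  classical
  refine ⟨1000 * (D⁻¹ * D).card ^ 8 * 8 ^ (D⁻¹ * D).card, ?_⟩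
  intro F hF
  have hFpos : 0 < F.card := lt_of_lt_of_le (by positivity) hF
  obtain ⟨σ0, hσ0⟩ := Finset.card_pos.mp hFpos
  letI : TopologicalSpace {σ // σ ∈ F} := ⊥
  haveI : DiscreteTopology {σ // σ ∈ F} := ⟨rfl⟩
  haveI : Nonempty {σ // σ ∈ F} := ⟨⟨σ0, hσ0⟩⟩
  let t : Γ × Γ → Set (Γ → {σ // σ ∈ F}) := fun q =>
    {c | (∃ ε ∈ D⁻¹ * D, ε * ((c q.2).1⁻¹ * q.2) = ((c q.1).1⁻¹ * q.1)) →
      ((c q.1).1⁻¹ * q.1 = (c q.2).1⁻¹ * q.2)}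
  have htcl : ∀ q, IsClosed (t q) := by
    intro q
    have heq : t q = (fun c : Γ → {σ // σ ∈ F} => (c q.1, c q.2)) ⁻¹'
        {y : {σ // σ ∈ F} × {σ // σ ∈ F} |
          (∃ ε ∈ D⁻¹ * D, ε * (y.2.1⁻¹ * q.2) = (y.1.1⁻¹ * q.1)) →
          (y.1.1⁻¹ * q.1 = y.2.1⁻¹ * q.2)} := rfl
    rw [heq]
    exact IsClosed.preimage
      ((continuous_apply q.1).prodMk (continuous_apply q.2)) (isClosed_discrete _)
  have hnonempty : (Set.univ ∩ ⋂ q, t q).Nonempty := by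
    by_contra hcon
    rw [Set.not_nonempty_iff_eq_empty] at hcon
    obtain ⟨u, hu⟩ := isCompact_univ.elim_finite_subfamily_closed t htcl hcon
    set G0 : Finset Γ := u.image Prod.fst ∪ u.image Prod.snd with hG0
    obtain ⟨P, hsep, hcov⟩ := finite_cover D hD F G0 hF
    have hc : ∀ γ : Γ, ∃ σ : {σ // σ ∈ F}, (γ ∈ G0 → σ.1⁻¹ * γ ∈ P) := by
      intro γ
      by_cases hγ : γ ∈ G0
      · obtain ⟨σ, hσF, hσP⟩ := hcov γ hγ
        exact ⟨⟨σ, hσF⟩, fun _ => hσP⟩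
      · exact ⟨⟨σ0, hσ0⟩, fun h => absurd h hγ⟩
    choose c hcP using hc
    have hcmem : c ∈ Set.univ ∩ ⋂ q ∈ u, t q := by
      refine ⟨trivial, ?_⟩
      rw [Set.mem_iInter₂]
      intro q hq
      intro hex
      have h1 : q.1 ∈ G0 := by
        rw [hG0]
        exact Finset.mem_union_left _ (Finset.mem_image.mpr ⟨q, hq, rfl⟩)
      have h2 : q.2 ∈ G0 := by
        rw [hG0]
        exact Finset.mem_union_right _ (Finset.mem_image.mpr ⟨q, hq, rfl⟩)
      exact hsep _ (hcP q.2 h2) _ (hcP q.1 h1) hex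
    rw [hu] at hcmem
    exact hcmem
  obtain ⟨c, -, hc⟩ := hnonempty
  have hckey : ∀ a b : Γ,
      (∃ ε ∈ D⁻¹ * D, ε * ((c b).1⁻¹ * b) = ((c a).1⁻¹ * a)) →
      ((c a).1⁻¹ * a = (c b).1⁻¹ * b) := by
    intro a b hex
    exact (Set.mem_iInter.mp hc (a, b)) hex
  refine ⟨fun g => if h : ∃ q : Γ × Γ, q.1 ∈ D ∧ g = q.1 * ((c q.2).1⁻¹ * q.2)
      then φ ⟨h.choose.1, h.choose_spec.1⟩ else ⟨0, hk⟩, ?_⟩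
  intro γ
  refine ⟨(c γ).1, (c γ).2, ?_⟩
  intro δ hδ
  rw [mul_assoc δ ((c γ).1)⁻¹ γ]
  have hex : ∃ q : Γ × Γ, q.1 ∈ D ∧ δ * ((c γ).1⁻¹ * γ) = q.1 * ((c q.2).1⁻¹ * q.2) :=
    ⟨(δ, γ), hδ, rfl⟩
  show (if h : ∃ q : Γ × Γ, q.1 ∈ D ∧ δ * ((c γ).1⁻¹ * γ) = q.1 * ((c q.2).1⁻¹ * q.2)
      then φ ⟨h.choose.1, h.choose_spec.1⟩ else ⟨0, hk⟩) = φ ⟨δ, hδ⟩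
  rw [dif_pos hex]
  have hq1 : hex.choose.1 ∈ D := hex.choose_spec.1
  have hq2 : δ * ((c γ).1⁻¹ * γ)
      = hex.choose.1 * ((c hex.choose.2).1⁻¹ * hex.choose.2) := hex.choose_spec.2
  have hεmem : hex.choose.1⁻¹ * δ ∈ D⁻¹ * D :=
    Finset.mul_mem_mul (Finset.mem_inv.mpr ⟨hex.choose.1, hq1, rfl⟩) hδ
  have heq : (hex.choose.1⁻¹ * δ) * ((c γ).1⁻¹ * γ)
      = ((c hex.choose.2).1⁻¹ * hex.choose.2) := by
    calc (hex.choose.1⁻¹ * δ) * ((c γ).1⁻¹ * γ)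
        = hex.choose.1⁻¹ * (δ * ((c γ).1⁻¹ * γ)) := by group
    _ = hex.choose.1⁻¹ * (hex.choose.1 * ((c hex.choose.2).1⁻¹ * hex.choose.2)) :=
        congrArg (fun z => hex.choose.1⁻¹ * z) hq2
    _ = (c hex.choose.2).1⁻¹ * hex.choose.2 := by group
  have hpe : (c hex.choose.2).1⁻¹ * hex.choose.2 = (c γ).1⁻¹ * γ :=
    hckey hex.choose.2 γ ⟨hex.choose.1⁻¹ * δ, hεmem, heq⟩
  have h3 : δ * ((c γ).1⁻¹ * γ) = hex.choose.1 * ((c γ).1⁻¹ * γ) := by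
    calc δ * ((c γ).1⁻¹ * γ)
        = hex.choose.1 * ((c hex.choose.2).1⁻¹ * hex.choose.2) := hq2
    _ = hex.choose.1 * ((c γ).1⁻¹ * γ) := congrArg (fun z => hex.choose.1 * z) hpe
  have hδe : hex.choose.1 = δ := (mul_right_cancel h3).symm
  exact congrArg φ (Subtype.ext hδe)
end

section
/- Let Γ be a group, X a compact Γ-flow, Y a Γ-flow, and Z ⊆ X × Y a closed Γ-invariant set projecting onto Y. Suppose U ⊆ X and V ⊆ Y are nonempty open, F ⊂ Γ is finite, U* = ⋂_{σ∈F} σ·U is nonempty, some point y ∈ Y is trapped in F·V, X is minimal, and (x, y) ∈ Z for some x. Then Z ∩ (U × V) ≠ ∅. -/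
open Pointwise

/-- The key step in deriving disjointness: if `Z ⊆ X × Y` is closed, invariant under the
diagonal action and projects onto `Y`, `U ⊆ X`, `V ⊆ Y` are nonempty open,
`U* = ⋂ σ ∈ F, σ • U` is nonempty, some `y` is trapped in `F·V`, `X` is minimal, and
`(x, y) ∈ Z` for some `x`, then `Z ∩ (U × V) ≠ ∅`. -/
theorem joining_meets_box {Γ : Type*} [Group Γ]
    {X : Type*} [TopologicalSpace X] [CompactSpace X] [T2Space X] [Nonempty X]
    [MulAction Γ X] [ContinuousConstSMul Γ X]
    {Y : Type*} [TopologicalSpace Y] [CompactSpace Y] [T2Space Y] [Nonempty Y]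
    [MulAction Γ Y] [ContinuousConstSMul Γ Y]
    (Z : Set (X × Y)) (hclosed : IsClosed Z)
    (hinv : ∀ γ : Γ, ∀ p ∈ Z, (γ • p.1, γ • p.2) ∈ Z)
    (hproj : Prod.snd '' Z = Set.univ)
    (U : Set X) (hU : IsOpen U) (hUne : U.Nonempty)
    (V : Set Y) (hV : IsOpen V) (hVne : V.Nonempty)
    (F : Finset Γ)
    (hUstar : (⋂ σ ∈ F, σ • U).Nonempty)
    (hmin : ∀ x : X, Dense (MulAction.orbit Γ x))
    (y : Y) (htrap : ∀ γ : Γ, γ • y ∈ ⋃ σ ∈ F, σ • V)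
    (x : X) (hxy : (x, y) ∈ Z) :
    (Z ∩ U ×ˢ V).Nonempty := by
  have hopen : IsOpen (⋂ σ ∈ F, σ • U) :=
    isOpen_biInter_finset fun σ _ => hU.smul σ
  obtain ⟨z, hzorb, hzU⟩ := (hmin x).exists_mem_open hopen hUstar
  obtain ⟨γ, rfl⟩ := hzorb
  simp only [Set.mem_iInter] at hzU
  obtain ⟨σ, hσF, hσV⟩ := Set.mem_iUnion₂.1 (htrap γ)
  refine ⟨⟨(σ⁻¹ * γ) • x, (σ⁻¹ * γ) • y⟩, hinv (σ⁻¹ * γ) _ hxy, ?_, ?_⟩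
  · have := hzU σ hσF
    obtain ⟨u, huU, hu⟩ := this
    have : (σ⁻¹ * γ) • x = u := by
      rw [mul_smul, ← hu, inv_smul_smul]
    rwa [this]
  · obtain ⟨v, hvV, hv⟩ := hσV
    have : (σ⁻¹ * γ) • y = v := by
      rw [mul_smul, ← hv, inv_smul_smul]
    rwa [this]
end
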